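/- arXiv:math-ph/0511054 — 8 statements merged into one kernel-verified Lean document; each statement's English description precedes it below -/
import Mathlib

section
/- Let κ > 0 and n be real numbers, and let α_n, β_n, γ_n, x_n be the fermionic SLE exponents. Define F(u,v) = u^{α_n} · v^{β_n} · (u−v)^{γ_n} using principal-branch complex powers, for u in the upper half-plane {z : Im z > 0} and v in the lower half-plane {z : Im z < 0} (so that u, v and u−v all avoid the nonpositive real axis and F is holomorphic in each variable separately). Then for all such (u,v): (κ/2)·[∂²F/∂u² + 2·∂²F/∂u∂v + ∂²F/∂v²] + (2/u)·∂F/∂u + (2/v)·∂F/∂v − x_n·(1/u² + 1/v²)·F − n·(1/u² − 1/v²)·F = 0. (Equivalently, Q̃(u,v,ε) = ε^{x_n} F(u,v) solves the leading-order SLE equation (κ/2)(∂_u+∂_v)²Q̃ + (2/u)∂_uQ̃ + (2/v)∂_vQ̃ − (1/u²+1/v²)ε∂_εQ̃ − n(1/u²−1/v²)Q̃ = 0.) -/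
/-!
The ansatz `P = u^a v^b (u-v)^c` has logarithmic derivatives `∂_u P = (a/u + c/(u-v)) P` and
`∂_v P = (b/v - c/(u-v)) P`. Since `(∂_u + ∂_v)(u - v) = 0`, the SLE operator applied to `P` is
`P` times `A/u² + B/v² + C/(uv)`, with the indicial polynomials
`A = κ/2·a(a-1) + 2a - x - n`, `B = κ/2·b(b-1) + 2b - x + n` and `C = κab - 2c`.
The fermionic exponents are a common root of all three.
-/

open Complex Filter Topology

theorem HasDerivAt.cpow_const' {f : ℂ → ℂ} {f' z a : ℂ} (hf : HasDerivAt f f' z)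
    (h : f z ∈ slitPlane) : HasDerivAt (fun z => f z ^ a) (a * f' / f z * f z ^ a) z := by
  refine (hf.cpow_const h).congr_deriv ?_
  rw [cpow_sub _ _ (slitPlane_ne_zero h), cpow_one]
  ring

theorem HasDerivAt.const_div {f : ℂ → ℂ} {f' z : ℂ} (c : ℂ) (hf : HasDerivAt f f' z)
    (h : f z ≠ 0) : HasDerivAt (fun z => c / f z) (-(c * f') / f z ^ 2) z :=
  ((hasDerivAt_const z c).div hf h).congr_deriv (by ring)

theorem mem_slitPlane_of_im_ne_zero {z : ℂ} (hz : z.im ≠ 0) : z ∈ slitPlane :=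
  mem_slitPlane_iff.mpr (Or.inr hz)

noncomputable def powerAnsatz (a b c u v : ℂ) : ℂ := u ^ a * v ^ b * (u - v) ^ c

/-- The leading-order SLE operator applied to `F`, after substituting `Q̃ = ε ^ x * F`
(so that `ε ∂_ε Q̃` contributes `x * F`). -/
noncomputable def sleOperator (κ x n : ℂ) (F : ℂ → ℂ → ℂ) (u v : ℂ) : ℂ :=
  κ / 2 * (deriv (fun u' => deriv (fun u'' => F u'' v) u') u
      + 2 * deriv (fun u' => deriv (fun v' => F u' v') v) u
      + deriv (fun v' => deriv (fun v'' => F u v'') v') v)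
    + 2 / u * deriv (fun u' => F u' v) u
    + 2 / v * deriv (fun v' => F u v') v
    - x * (1 / u ^ 2 + 1 / v ^ 2) * F u v
    - n * (1 / u ^ 2 - 1 / v ^ 2) * F u v

namespace powerAnsatz

variable {a b c u v : ℂ}

theorem hasDerivAt_left (hu : u ∈ slitPlane) (huv : u - v ∈ slitPlane) :
    HasDerivAt (fun u => powerAnsatz a b c u v)
      ((a / u + c / (u - v)) * powerAnsatz a b c u v) u := by
  have hw := ((hasDerivAt_id u).sub_const v).cpow_const' (a := c) huv
  refine (((hasDerivAt_id u).cpow_const' (a := a) hu).mul_const (v ^ b) |>.mul hw).congr_deriv ?_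
  simp only [powerAnsatz, id]
  ring

theorem hasDerivAt_right (hv : v ∈ slitPlane) (huv : u - v ∈ slitPlane) :
    HasDerivAt (fun v => powerAnsatz a b c u v)
      ((b / v - c / (u - v)) * powerAnsatz a b c u v) v := by
  have hw := ((hasDerivAt_id v).const_sub u).cpow_const' (a := c) huv
  refine (((hasDerivAt_id v).cpow_const' (a := b) hv).const_mul (u ^ a) |>.mul hw).congr_deriv ?_
  simp only [powerAnsatz, id]
  ring

theorem eventually_slitPlane_left (hu : u ∈ slitPlane) (huv : u - v ∈ slitPlane) :
    ∀ᶠ u' in 𝓝 u, u' ∈ slitPlane ∧ u' - v ∈ slitPlane :=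
  (isOpen_slitPlane.eventually_mem hu).and <|
    (continuous_id.sub continuous_const).continuousAt.eventually_mem
      (isOpen_slitPlane.mem_nhds huv)

theorem eventually_slitPlane_right (hv : v ∈ slitPlane) (huv : u - v ∈ slitPlane) :
    ∀ᶠ v' in 𝓝 v, v' ∈ slitPlane ∧ u - v' ∈ slitPlane :=
  (isOpen_slitPlane.eventually_mem hv).and <|
    (continuous_const.sub continuous_id).continuousAt.eventually_mem
      (isOpen_slitPlane.mem_nhds huv)

theorem deriv_deriv_left (hu : u ∈ slitPlane) (huv : u - v ∈ slitPlane) :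
    deriv (fun u' => deriv (fun u'' => powerAnsatz a b c u'' v) u') u =
      ((a / u + c / (u - v)) ^ 2 - a / u ^ 2 - c / (u - v) ^ 2) * powerAnsatz a b c u v := by
  have hD : (fun u' => deriv (fun u'' => powerAnsatz a b c u'' v) u') =ᶠ[𝓝 u]
      fun u' => (a / u' + c / (u' - v)) * powerAnsatz a b c u' v := by
    filter_upwards [eventually_slitPlane_left hu huv] with u' h
    exact (hasDerivAt_left h.1 h.2).deriv
  have hlog : HasDerivAt (fun u' => a / u' + c / (u' - v)) (-a / u ^ 2 - c / (u - v) ^ 2) u :=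
    (((hasDerivAt_id' u).const_div a (slitPlane_ne_zero hu)).add
      (((hasDerivAt_id' u).sub_const v).const_div c (slitPlane_ne_zero huv))).congr_deriv
      (by ring)
  rw [hD.deriv_eq]
  exact ((hlog.mul (hasDerivAt_left hu huv)).congr_deriv (by ring)).deriv

theorem deriv_deriv_mixed (hu : u ∈ slitPlane) (hv : v ∈ slitPlane) (huv : u - v ∈ slitPlane) :
    deriv (fun u' => deriv (fun v' => powerAnsatz a b c u' v') v) u =
      ((b / v - c / (u - v)) * (a / u + c / (u - v)) + c / (u - v) ^ 2) *
        powerAnsatz a b c u v := by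
  have hD : (fun u' => deriv (fun v' => powerAnsatz a b c u' v') v) =ᶠ[𝓝 u]
      fun u' => (b / v - c / (u' - v)) * powerAnsatz a b c u' v := by
    filter_upwards [eventually_slitPlane_left hu huv] with u' h
    exact (hasDerivAt_right hv h.2).deriv
  have hlog : HasDerivAt (fun u' => b / v - c / (u' - v)) (c / (u - v) ^ 2) u :=
    ((hasDerivAt_const u (b / v)).sub
      (((hasDerivAt_id' u).sub_const v).const_div c (slitPlane_ne_zero huv))).congr_deriv
      (by ring)
  rw [hD.deriv_eq]
  exact ((hlog.mul (hasDerivAt_left hu huv)).congr_deriv (by ring)).deriv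

theorem deriv_deriv_right (hv : v ∈ slitPlane) (huv : u - v ∈ slitPlane) :
    deriv (fun v' => deriv (fun v'' => powerAnsatz a b c u v'') v') v =
      ((b / v - c / (u - v)) ^ 2 - b / v ^ 2 - c / (u - v) ^ 2) * powerAnsatz a b c u v := by
  have hD : (fun v' => deriv (fun v'' => powerAnsatz a b c u v'') v') =ᶠ[𝓝 v]
      fun v' => (b / v' - c / (u - v')) * powerAnsatz a b c u v' := by
    filter_upwards [eventually_slitPlane_right hv huv] with v' h
    exact (hasDerivAt_right h.1 h.2).deriv
  have hlog : HasDerivAt (fun v' => b / v' - c / (u - v')) (-b / v ^ 2 - c / (u - v) ^ 2) v :=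
    (((hasDerivAt_id' v).const_div b (slitPlane_ne_zero hv)).sub
      (((hasDerivAt_id' v).const_sub u).const_div c (slitPlane_ne_zero huv))).congr_deriv
      (by ring)
  rw [hD.deriv_eq]
  exact ((hlog.mul (hasDerivAt_right hv huv)).congr_deriv (by ring)).deriv

theorem sleOperator_eq_zero {κ x n : ℂ} (hu : u ∈ slitPlane) (hv : v ∈ slitPlane)
    (huv : u - v ∈ slitPlane)
    (ha : κ / 2 * a * (a - 1) + 2 * a - x - n = 0)
    (hb : κ / 2 * b * (b - 1) + 2 * b - x + n = 0)
    (hc : κ * a * b - 2 * c = 0) :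
    sleOperator κ x n (powerAnsatz a b c) u v = 0 := by
  rw [sleOperator, deriv_deriv_left hu huv, deriv_deriv_mixed hu hv huv, deriv_deriv_right hv huv,
    (hasDerivAt_left hu huv).deriv, (hasDerivAt_right hv huv).deriv]
  have hu0 := slitPlane_ne_zero hu
  have hv0 := slitPlane_ne_zero hv
  have huv0 := slitPlane_ne_zero huv
  linear_combination (norm := (field_simp; ring))
    powerAnsatz a b c u v * (ha / u ^ 2 + hb / v ^ 2 + hc / (u * v))

end powerAnsatz

section FermionicExponents

variable {K : Type*} [Field K] [CharZero K] {κ n α β γ x : K}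

theorem fermionic_indicial_left (hκ : κ ≠ 0) (hα : α = (κ - 8) / (2 * κ) - n / 2)
    (hx : x = 1 - κ / 8 + κ / 8 * n ^ 2) : κ / 2 * α * (α - 1) + 2 * α - x - n = 0 := by
  subst hα hx
  field_simp
  ring

theorem fermionic_indicial_right (hκ : κ ≠ 0) (hβ : β = (κ - 8) / (2 * κ) + n / 2)
    (hx : x = 1 - κ / 8 + κ / 8 * n ^ 2) : κ / 2 * β * (β - 1) + 2 * β - x + n = 0 := by
  -- `β_n = α_{-n}` and `x_{-n} = x_n`
  simpa using fermionic_indicial_left (n := -n) hκ (by rw [hβ]; ring) (by rw [hx]; ring)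

theorem fermionic_indicial_mixed (hκ : κ ≠ 0) (hα : α = (κ - 8) / (2 * κ) - n / 2)
    (hβ : β = (κ - 8) / (2 * κ) + n / 2) (hγ : γ = ((8 - κ) ^ 2 - κ ^ 2 * n ^ 2) / (8 * κ)) :
    κ * α * β - 2 * γ = 0 := by
  subst hα hβ hγ
  field_simp
  ring

end FermionicExponents

/-- The fermionic power-law ansatz `F(u,v) = u^α v^β (u-v)^γ` with the fermionic SLE
exponents solves the leading-order SLE equation, for `u` in the upper half-plane and
`v` in the lower half-plane. -/
theorem stmt0 (κ n : ℝ) (hκ : 0 < κ)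
    (α β γ x : ℝ)
    (hα : α = (κ - 8) / (2 * κ) - n / 2)
    (hβ : β = (κ - 8) / (2 * κ) + n / 2)
    (hγ : γ = ((8 - κ) ^ 2 - κ ^ 2 * n ^ 2) / (8 * κ))
    (hx : x = 1 - κ / 8 + κ / 8 * n ^ 2)
    (F : ℂ → ℂ → ℂ)
    (hF : ∀ u v : ℂ, F u v = u ^ (α : ℂ) * v ^ (β : ℂ) * (u - v) ^ (γ : ℂ)) :
    ∀ u v : ℂ, 0 < u.im → v.im < 0 →
      (κ / 2 : ℂ) *
          (deriv (fun u' => deriv (fun u'' => F u'' v) u') u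
            + 2 * deriv (fun u' => deriv (fun v' => F u' v') v) u
            + deriv (fun v' => deriv (fun v'' => F u v'') v') v)
        + (2 / u) * deriv (fun u' => F u' v) u
        + (2 / v) * deriv (fun v' => F u v') v
        - (x : ℂ) * (1 / u ^ 2 + 1 / v ^ 2) * F u v
        - (n : ℂ) * (1 / u ^ 2 - 1 / v ^ 2) * F u v = 0 := by
  intro u v hu hv
  obtain rfl : F = powerAnsatz α β γ := funext₂ hF
  have hκ0 := hκ.ne'
  exact powerAnsatz.sleOperator_eq_zero (mem_slitPlane_of_im_ne_zero hu.ne')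
    (mem_slitPlane_of_im_ne_zero hv.ne)
    (mem_slitPlane_of_im_ne_zero (sub_pos.2 (hv.trans hu)).ne')
    (by exact_mod_cast fermionic_indicial_left hκ0 hα hx)
    (by exact_mod_cast fermionic_indicial_right hκ0 hβ hx)
    (by exact_mod_cast fermionic_indicial_mixed hκ0 hα hβ hγ)
end

section
/- Let w ∈ ℍ and h ∈ ℝ. Then (i) the derivative of g_{w,ε,θ} at 0 equals g'_{w,ε,θ}(0) = 1 + (ε²/16)(e^{2iθ}/w² + e^{−2iθ}/w̄²); and (ii) with the principal-branch power z^h (well defined for ε small enough since g'_{w,ε,θ}(0) → 1 uniformly in θ as ε → 0), lim_{ε→0⁺} (8/(π ε²)) ∫₀^{2π} e^{−2iθ} (g'_{w,ε,θ}(0))^{h} dθ = h/w². (This is the computation giving the one-point function Q₂^{(1,0)}(w) = h/w² for a conformal restriction measure with restriction exponent h.) -/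
open Complex Real Filter

open scoped Topology Interval

/-!
By the first part, `g'_{w,ε,θ}(0) = 1 + t k(θ)` with `t = ε²/16` and
`k(θ) = e^{2iθ}/w² + e^{-2iθ}/w̄²`. Uniformly in `θ`, `(1 + t k)^h = 1 + h t k + O(t²)`, and
against the weight `e^{-2iθ}` only the constant term `1/w²` of `e^{-2iθ} k(θ)` survives
integration over a period. Hence the integral is `2π h t / w² + O(t²)`.
-/

theorem norm_one_add_cpow_sub_one_sub_mul_le {h z : ℂ} (hz : 2 * (‖h‖ + 1) * ‖z‖ ≤ 1) :
    ‖(1 + z) ^ h - 1 - h * z‖ ≤ (2 * ‖h‖ + 1) ^ 2 * ‖z‖ ^ 2 := by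
  have hz_half : ‖z‖ ≤ 1 / 2 := by nlinarith [norm_nonneg h, norm_nonneg z]
  have hz_lt : ‖z‖ < 1 := hz_half.trans_lt (by norm_num)
  have hlog_sub : ‖log (1 + z) - z‖ ≤ ‖z‖ ^ 2 := by
    have hinv : (1 - ‖z‖)⁻¹ ≤ 2 := by rw [inv_le_comm₀ (by linarith) two_pos]; linarith
    refine (norm_log_one_add_sub_self_le hz_lt).trans ?_
    nlinarith [sq_nonneg ‖z‖]
  have hlog : ‖log (1 + z)‖ ≤ 2 * ‖z‖ :=
    (norm_log_one_add_half_le_self hz_half).trans (by linarith [norm_nonneg z])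
  set u := h * log (1 + z)
  have hu : ‖u‖ ≤ 2 * ‖h‖ * ‖z‖ := by
    rw [norm_mul]; linarith [mul_le_mul_of_nonneg_left hlog (norm_nonneg h)]
  have hexp : ‖exp u - 1 - u‖ ≤ ‖u‖ ^ 2 :=
    norm_exp_sub_one_sub_id_le (by nlinarith [norm_nonneg h, norm_nonneg z])
  have hcpow : (1 + z) ^ h = exp u := by
    rw [cpow_def_of_ne_zero (slitPlane_ne_zero (mem_slitPlane_of_norm_lt_one hz_lt)), mul_comm]
  calc ‖(1 + z) ^ h - 1 - h * z‖ = ‖(exp u - 1 - u) + h * (log (1 + z) - z)‖ := by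
        rw [hcpow]; congr 1; ring
    _ ≤ ‖u‖ ^ 2 + ‖h‖ * ‖z‖ ^ 2 := by
        refine (norm_add_le _ _).trans ?_
        rw [norm_mul]; gcongr
    _ ≤ (2 * ‖h‖ * ‖z‖) ^ 2 + ‖h‖ * ‖z‖ ^ 2 := by gcongr
    _ ≤ (2 * ‖h‖ + 1) ^ 2 * ‖z‖ ^ 2 := by nlinarith [norm_nonneg h, sq_nonneg ‖z‖]

theorem integral_exp_int_mul_mul_I {n : ℤ} (hn : n ≠ 0) :
    ∫ θ in (0 : ℝ)..(2 * π), exp (n * θ * I) = 0 := by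
  have hc : (n : ℂ) * I ≠ 0 := mul_ne_zero (Int.cast_ne_zero.mpr hn) I_ne_zero
  simp_rw [mul_right_comm _ _ I]
  rw [integral_exp_mul_complex hc]
  have : (n : ℂ) * I * ((2 * π : ℝ) : ℂ) = n * (2 * π * I) := by push_cast; ring
  rw [this, exp_int_mul_two_pi_mul_I]
  simp

theorem hasDerivAt_const_div_sub (a : ℂ) {v : ℂ} (hv : v ≠ 0) :
    HasDerivAt (fun z : ℂ => a / (v - z)) (a / v ^ 2) 0 := by
  refine ((hasDerivAt_const (0 : ℂ) a).div ((hasDerivAt_const 0 v).sub (hasDerivAt_id 0))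
    (by simpa using hv)).congr_deriv ?_
  simp

theorem norm_integral_mul_cpow_remainder_le {a b A B : ℝ} {φ k : ℝ → ℂ} {h t : ℂ}
    (hφ : ∀ θ ∈ [[a, b]], ‖φ θ‖ ≤ A) (hk : ∀ θ ∈ [[a, b]], ‖k θ‖ ≤ B)
    (ht : 2 * (‖h‖ + 1) * (‖t‖ * B) ≤ 1) :
    ‖∫ θ in a..b, φ θ * ((1 + t * k θ) ^ h - 1 - h * (t * k θ))‖
      ≤ A * ((2 * ‖h‖ + 1) ^ 2 * (‖t‖ * B) ^ 2) * |b - a| := by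
  refine intervalIntegral.norm_integral_le_of_norm_le_const fun θ hθ => ?_
  have hθ' := Set.uIoc_subset_uIcc hθ
  have htk : ‖t * k θ‖ ≤ ‖t‖ * B := by rw [norm_mul]; gcongr; exact hk θ hθ'
  rw [norm_mul]
  refine mul_le_mul (hφ θ hθ') ?_ (norm_nonneg _) ((norm_nonneg _).trans (hφ θ hθ'))
  refine (norm_one_add_cpow_sub_one_sub_mul_le
    ((mul_le_mul_of_nonneg_left htk (by positivity)).trans ht)).trans ?_
  gcongr

theorem inv_mul_integral_mul_one_add_mul_cpow_sub {a b : ℝ} {φ k : ℝ → ℂ} {h t : ℂ}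
    (hφ : Continuous φ) (hk : Continuous k) (hφ₀ : ∫ θ in a..b, φ θ = 0) (ht : t ≠ 0)
    (hslit : ∀ θ ∈ [[a, b]], 1 + t * k θ ∈ slitPlane) :
    t⁻¹ * (∫ θ in a..b, φ θ * (1 + t * k θ) ^ h) - h * ∫ θ in a..b, φ θ * k θ
      = t⁻¹ * ∫ θ in a..b, φ θ * ((1 + t * k θ) ^ h - 1 - h * (t * k θ)) := by
  have hint : IntervalIntegrable (fun θ => φ θ * (1 + t * k θ) ^ h) MeasureTheory.volume a b :=
    (hφ.continuousOn.mul ((continuousOn_const.add (continuousOn_const.mul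
      hk.continuousOn)).cpow continuousOn_const hslit)).intervalIntegrable
  have hφk : IntervalIntegrable (fun θ => h * t * (φ θ * k θ)) MeasureTheory.volume a b :=
    (continuous_const.mul (hφ.mul hk)).intervalIntegrable a b
  have hsplit : ∫ θ in a..b, φ θ * ((1 + t * k θ) ^ h - 1 - h * (t * k θ))
      = (∫ θ in a..b, φ θ * (1 + t * k θ) ^ h) - (∫ θ in a..b, φ θ)
        - h * t * ∫ θ in a..b, φ θ * k θ := by
    rw [← intervalIntegral.integral_const_mul, ← intervalIntegral.integral_sub hint
      (hφ.intervalIntegrable a b), ← intervalIntegral.integral_sub (hint.sub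
      (hφ.intervalIntegrable a b)) hφk]
    congr 1; ext θ; ring
  rw [hsplit, hφ₀]
  field_simp
  ring

theorem tendsto_inv_mul_integral_mul_one_add_mul_cpow {a b : ℝ} {φ k : ℝ → ℂ}
    (hφ : Continuous φ) (hk : Continuous k) (hφ₀ : ∫ θ in a..b, φ θ = 0) (h : ℂ) :
    Tendsto (fun t : ℂ => t⁻¹ * ∫ θ in a..b, φ θ * (1 + t * k θ) ^ h) (𝓝[≠] 0)
      (𝓝 (h * ∫ θ in a..b, φ θ * k θ)) := by
  obtain ⟨A, hA⟩ := isCompact_uIcc.exists_bound_of_continuousOn (hφ.continuousOn (s := [[a, b]]))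
  obtain ⟨B, hB⟩ := isCompact_uIcc.exists_bound_of_continuousOn (hk.continuousOn (s := [[a, b]]))
  have hsmall : ∀ᶠ t : ℂ in 𝓝[≠] 0, 2 * (‖h‖ + 1) * (‖t‖ * B) ≤ 1 := by
    have : Tendsto (fun t : ℂ => 2 * (‖h‖ + 1) * (‖t‖ * B)) (𝓝 0) (𝓝 0) :=
      Continuous.tendsto' (by fun_prop) 0 0 (by simp)
    exact ((this.eventually_lt_const one_pos).mono fun t ht => ht.le).filter_mono
      nhdsWithin_le_nhds
  rw [tendsto_iff_norm_sub_tendsto_zero]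
  set C := A * (2 * ‖h‖ + 1) ^ 2 * B ^ 2 * |b - a| with hC
  have hbound : Tendsto (fun t : ℂ => ‖t‖ * C) (𝓝[≠] 0) (𝓝 0) :=
    (Continuous.tendsto' (by fun_prop) 0 0 (by simp)).mono_left nhdsWithin_le_nhds
  refine squeeze_zero_norm' ?_ hbound
  filter_upwards [hsmall, self_mem_nhdsWithin] with t ht ht0
  have ht_pos : 0 < ‖t‖ := norm_pos_iff.mpr ht0
  have hslit : ∀ θ ∈ [[a, b]], 1 + t * k θ ∈ slitPlane := fun θ hθ =>
    have htk : ‖t * k θ‖ ≤ ‖t‖ * B := by rw [norm_mul]; gcongr; exact hB θ hθ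
    mem_slitPlane_of_norm_lt_one (by nlinarith [norm_nonneg h, norm_nonneg (t * k θ)])
  rw [inv_mul_integral_mul_one_add_mul_cpow_sub hφ hk hφ₀ ht0 hslit, norm_norm, norm_mul,
    norm_inv]
  calc ‖t‖⁻¹ * ‖∫ θ in a..b, φ θ * ((1 + t * k θ) ^ h - 1 - h * (t * k θ))‖
      ≤ ‖t‖⁻¹ * (A * ((2 * ‖h‖ + 1) ^ 2 * (‖t‖ * B) ^ 2) * |b - a|) := by
        gcongr; exact norm_integral_mul_cpow_remainder_le hA hB ht
    _ = ‖t‖ * C := by rw [hC]; field_simp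

theorem integral_exp_neg_two_mul_I :
    ∫ θ in (0 : ℝ)..(2 * π), exp (-(2 * (θ : ℂ)) * I) = 0 := by
  simpa using integral_exp_int_mul_mul_I (n := -2) (by norm_num)

theorem integral_exp_neg_two_mul_I_mul (u v : ℂ) :
    ∫ θ in (0 : ℝ)..(2 * π), exp (-(2 * (θ : ℂ)) * I) *
      (exp (2 * (θ : ℂ) * I) / u + exp (-(2 * (θ : ℂ)) * I) / v) = 2 * π / u := by
  have hexpand : ∀ θ : ℝ, exp (-(2 * (θ : ℂ)) * I) *
      (exp (2 * (θ : ℂ) * I) / u + exp (-(2 * (θ : ℂ)) * I) / v)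
        = u⁻¹ + v⁻¹ * exp (((-4 : ℤ) : ℂ) * θ * I) := by
    intro θ
    rw [mul_add, mul_div_assoc', mul_div_assoc', ← Complex.exp_add, ← Complex.exp_add,
      show -(2 * (θ : ℂ)) * I + 2 * θ * I = 0 by ring, Complex.exp_zero,
      show -(2 * (θ : ℂ)) * I + -(2 * θ) * I = ((-4 : ℤ) : ℂ) * θ * I by push_cast; ring]
    ring
  simp_rw [hexpand]
  rw [intervalIntegral.integral_add intervalIntegrable_const
    ((Continuous.intervalIntegrable (by fun_prop)) _ _), intervalIntegral.integral_const_mul,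
    integral_exp_int_mul_mul_I (by norm_num)]
  simp [div_eq_mul_inv]

theorem tendsto_ofReal_sq_div_nhdsNE (c : ℂ) (hc : c ≠ 0) :
    Tendsto (fun ε : ℝ => (ε : ℂ) ^ 2 / c) (𝓝[>] 0) (𝓝[≠] 0) := by
  refine tendsto_nhdsWithin_iff.mpr ⟨?_, ?_⟩
  · exact ((Continuous.tendsto' (by fun_prop) 0 0 (by simp)).mono_left nhdsWithin_le_nhds)
  · filter_upwards [self_mem_nhdsWithin] with ε (hε : 0 < ε)
    exact div_ne_zero (pow_ne_zero _ (ofReal_ne_zero.mpr hε.ne')) hc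

/-- (i) The derivative of `g_{w,ε,θ}` at `0` is `1 + (ε²/16)(e^{2iθ}/w² + e^{-2iθ}/w̄²)`;
(ii) `lim_{ε→0⁺} (8/(πε²)) ∫₀^{2π} e^{-2iθ} (g'_{w,ε,θ}(0))^h dθ = h/w²`. -/
theorem stmt5 (w : ℂ) (hw : 0 < w.im) (h : ℝ)
    (g : ℝ → ℝ → ℂ → ℂ)
    (hg : ∀ ε θ z, g ε θ z = z
        + ((ε : ℂ) ^ 2 / 16) * Complex.exp (2 * (θ : ℂ) * Complex.I) / (w - z)
        + ((ε : ℂ) ^ 2 / 16) * Complex.exp (-(2 * (θ : ℂ)) * Complex.I) / (starRingEnd ℂ w - z)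
        - ((ε : ℂ) ^ 2 / 16) * Complex.exp (2 * (θ : ℂ) * Complex.I) / w
        - ((ε : ℂ) ^ 2 / 16) * Complex.exp (-(2 * (θ : ℂ)) * Complex.I) / starRingEnd ℂ w) :
    (∀ ε θ : ℝ, deriv (g ε θ) 0
        = 1 + ((ε : ℂ) ^ 2 / 16) * (Complex.exp (2 * (θ : ℂ) * Complex.I) / w ^ 2
            + Complex.exp (-(2 * (θ : ℂ)) * Complex.I) / (starRingEnd ℂ w) ^ 2)) ∧
    Filter.Tendsto
      (fun ε : ℝ => ((8 / (π * ε ^ 2) : ℝ) : ℂ) *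
        ∫ θ in (0 : ℝ)..(2 * π),
          Complex.exp (-(2 * (θ : ℂ)) * Complex.I) * (deriv (g ε θ) 0) ^ (h : ℂ))
      (nhdsWithin 0 (Set.Ioi 0)) (nhds ((h : ℂ) / w ^ 2)) := by
  have hw0 : w ≠ 0 := fun hw0 => by simp [hw0] at hw
  have hderiv : ∀ ε θ : ℝ, deriv (g ε θ) 0
      = 1 + ((ε : ℂ) ^ 2 / 16) * (exp (2 * (θ : ℂ) * I) / w ^ 2
        + exp (-(2 * (θ : ℂ)) * I) / (starRingEnd ℂ w) ^ 2) := by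
    intro ε θ
    rw [show g ε θ = _ from funext (hg ε θ)]
    refine (((((hasDerivAt_id 0).add (hasDerivAt_const_div_sub _ hw0)).add
      (hasDerivAt_const_div_sub _ ((map_ne_zero _).mpr hw0))).sub_const _).sub_const
      _).deriv.trans ?_
    ring
  refine ⟨hderiv, ?_⟩
  have hlim := (tendsto_inv_mul_integral_mul_one_add_mul_cpow
    (k := fun θ : ℝ => exp (2 * (θ : ℂ) * I) / w ^ 2
      + exp (-(2 * (θ : ℂ)) * I) / (starRingEnd ℂ w) ^ 2)
    (by fun_prop) (by fun_prop) integral_exp_neg_two_mul_I (h : ℂ)).comp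
    (tendsto_ofReal_sq_div_nhdsNE 16 (by norm_num))
  rw [integral_exp_neg_two_mul_I_mul] at hlim
  convert hlim.const_mul (2 * (π : ℂ))⁻¹ using 1
  · ext ε
    simp_rw [Function.comp, hderiv]
    push_cast
    ring
  · field_simp
end

section
/- Let w ∈ ℍ and h ∈ ℝ, and for ε > 0 small enough that g'_{w,ε,θ}(0) avoids the nonpositive real axis for all θ, consider the Fourier coefficients of θ ↦ (g'_{w,ε,θ}(0))^{h} (principal power), where g'_{w,ε,θ}(0) = 1 + (ε²/16)(e^{2iθ}/w² + e^{−2iθ}/w̄²). Then: (i) all odd Fourier coefficients vanish exactly: ∫₀^{2π} e^{−i(2m+1)θ} (g'_{w,ε,θ}(0))^{h} dθ = 0 for every integer m; and (ii) for every nonzero integer n, ∫₀^{2π} e^{−2inθ} (g'_{w,ε,θ}(0))^{h} dθ = O(ε^{2|n|}) as ε → 0⁺. -/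
/-!
Put `a = 1/(16 w²)`, `b = 1/(16 w̄²)` and `q_ε(z) = 1 + ε² (a z² + b / z²)`, so that
`g'_{w,ε,θ}(0) = q_ε(e^{iθ})` and the integrals are the coefficients
`∫ e^{-ikθ} q_ε(e^{iθ})^h dθ` of `q_ε^h` on the unit circle.

Since `q_ε` is even, the shift `θ ↦ θ + π` (that is, `z ↦ -z`) changes the sign of every odd
coefficient, which therefore vanishes.

For `k ≥ 0`, `εz` and `ε/z` are both at most `K` on the annulus `1 ≤ |z| ≤ K/ε`, so for a small
constant `K` the value `q_ε(z)` stays within `1/2` of `1` there: `q_ε^h` is holomorphic on the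
annulus and bounded by `2^|h|`. Moving the contour out to `|z| = K/ε` bounds the `k`-th
coefficient by `2π 2^|h| (ε/K)^k`. Negative `k` reduce to positive ones through `z ↦ z⁻¹`, which
swaps `a` and `b`.
-/

open Complex Real Filter Asymptotics Metric Function Topology

theorem Function.Antiperiodic.intervalIntegral_add_two_mul_eq_zero {E : Type*}
    [NormedAddCommGroup E] [NormedSpace ℝ E] {f : ℝ → E} {T : ℝ} (hf : Antiperiodic f T)
    (t : ℝ) : ∫ x in t..t + 2 * T, f x = 0 := by
  have hshift : ∫ x in t..t + 2 * T, f x = -∫ x in t..t + 2 * T, f x :=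
    calc ∫ x in t..t + 2 * T, f x
        = ∫ x in t + T..t + T + 2 * T, f x := hf.periodic_two_mul.intervalIntegral_add_eq t _
      _ = ∫ x in t..t + 2 * T, f (x + T) := by
        rw [intervalIntegral.integral_comp_add_right]; ring_nf
      _ = -∫ x in t..t + 2 * T, f x := by simp only [hf _, intervalIntegral.integral_neg]
  have : (2 : ℝ) • ∫ x in t..t + 2 * T, f x = 0 := by
    rw [two_smul]; nth_rw 2 [hshift]; exact add_neg_cancel _
  simpa using this

noncomputable def circleCoeff (f : ℂ → ℂ) (k : ℤ) : ℂ :=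
  ∫ θ in (0 : ℝ)..2 * π, exp (θ * I) ^ (-k) * f (exp (θ * I))

theorem circleIntegral_div_pow_succ_eq (f : ℂ → ℂ) (k : ℕ) :
    (∮ z in C(0, 1), f z / z ^ (k + 1)) = I * circleCoeff f k := by
  rw [circleIntegral, circleCoeff, ← intervalIntegral.integral_const_mul]
  refine intervalIntegral.integral_congr fun θ _ => ?_
  have hne : exp (θ * I) ≠ 0 := exp_ne_zero _
  simp only [deriv_circleMap, circleMap_zero, ofReal_one, one_mul, smul_eq_mul, zpow_neg,
    zpow_natCast]
  field_simp
  ring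

theorem norm_circleCoeff_le {f : ℂ → ℂ} {R M : ℝ} (hR : 1 ≤ R)
    (hf : ∀ z : ℂ, 1 ≤ ‖z‖ → ‖z‖ ≤ R → DifferentiableAt ℂ f z)
    (hM : ∀ z : ℂ, ‖z‖ = R → ‖f z‖ ≤ M) (k : ℕ) :
    ‖circleCoeff f k‖ ≤ 2 * π * M / R ^ k := by
  have hR0 : 0 < R := one_pos.trans_le hR
  have hg : ∀ z : ℂ, 1 ≤ ‖z‖ → ‖z‖ ≤ R → DifferentiableAt ℂ (fun z => f z / z ^ (k + 1)) z :=
    fun z h1 h2 => (hf z h1 h2).div (differentiableAt_pow _)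
      (pow_ne_zero _ (norm_pos_iff.mp (one_pos.trans_le h1)))
  have hshift : (∮ z in C(0, R), f z / z ^ (k + 1)) = ∮ z in C(0, 1), f z / z ^ (k + 1) := by
    refine circleIntegral_eq_of_differentiable_on_annulus_off_countable one_pos hR
      Set.countable_empty (fun z hz => ?_) fun z hz => ?_
    · simp only [Set.mem_sdiff, mem_closedBall, mem_ball, dist_zero_right, not_lt] at hz
      exact (hg z hz.2 hz.1).continuousAt.continuousWithinAt
    · simp only [Set.sdiff_empty, Set.mem_sdiff, mem_ball, mem_closedBall, dist_zero_right,
        not_le] at hz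
      exact hg z hz.2.le hz.1.le
  calc ‖circleCoeff f k‖ = ‖∮ z in C(0, R), f z / z ^ (k + 1)‖ := by
        rw [hshift, circleIntegral_div_pow_succ_eq, norm_mul, norm_I, one_mul]
    _ ≤ 2 * π * R * (M / R ^ (k + 1)) := by
        refine circleIntegral.norm_integral_le_of_norm_le_const hR0.le fun z hz => ?_
        have hz : ‖z‖ = R := by simpa using hz
        rw [norm_div, norm_pow, hz]
        gcongr
        exact hM z hz
    _ = 2 * π * M / R ^ k := by field_simp; ring

theorem circleCoeff_eq_zero_of_odd {f : ℂ → ℂ} (hf : ∀ z, f (-z) = f z) {k : ℤ} (hk : Odd k) :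
    circleCoeff f k = 0 := by
  have hanti : Antiperiodic (fun θ : ℝ => exp (θ * I) ^ (-k) * f (exp (θ * I))) π := by
    intro θ
    have hexp : exp (↑(θ + π) * I) = -exp (θ * I) := by
      push_cast; exact exp_mul_I_antiperiodic θ
    simp only [hexp, hk.neg.neg_zpow, hf, neg_mul]
  simpa [circleCoeff] using hanti.intervalIntegral_add_two_mul_eq_zero 0

theorem circleCoeff_comp_inv (f : ℂ → ℂ) (k : ℤ) :
    circleCoeff (fun z => f z⁻¹) k = circleCoeff f (-k) := by
  have hexp : ∀ θ : ℝ, exp (↑(2 * π - θ) * I) = (exp (θ * I))⁻¹ := fun θ => by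
    push_cast; rw [sub_mul, Complex.exp_sub, exp_two_pi_mul_I, one_div]
  have hreflect := intervalIntegral.integral_comp_sub_left
    (fun θ : ℝ => exp (θ * I) ^ (- -k) * f (exp (θ * I))) (a := 0) (b := 2 * π) (2 * π)
  simp only [sub_zero, sub_self, hexp, inv_zpow', neg_neg] at hreflect
  simpa only [circleCoeff, neg_neg] using hreflect

noncomputable def quadPert (a b : ℂ) (ε : ℝ) (z : ℂ) : ℂ :=
  1 + (ε : ℂ) ^ 2 * (a * z ^ 2 + b / z ^ 2)

theorem quadPert_neg (a b : ℂ) (ε : ℝ) (z : ℂ) : quadPert a b ε (-z) = quadPert a b ε z := by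
  simp only [quadPert, even_two.neg_pow]

theorem quadPert_inv (a b : ℂ) (ε : ℝ) (z : ℂ) : quadPert a b ε z⁻¹ = quadPert b a ε z := by
  simp only [quadPert, inv_pow, div_inv_eq_mul]
  ring

theorem norm_quadPert_sub_one_le {a b : ℂ} {K ε : ℝ} (hK : K ^ 2 * (‖a‖ + ‖b‖) ≤ 1 / 2)
    (hε : 0 ≤ ε) (hεK : ε ≤ K) {z : ℂ} (hz : 1 ≤ ‖z‖) (hzK : ε * ‖z‖ ≤ K) :
    ‖quadPert a b ε z - 1‖ ≤ 1 / 2 := by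
  have hout : ‖(ε : ℂ) * z‖ ≤ K := by simpa [abs_of_nonneg hε] using hzK
  have hin : ‖(ε : ℂ) / z‖ ≤ K := by
    rw [norm_div, norm_real, Real.norm_of_nonneg hε]
    exact (div_le_self hε hz).trans hεK
  calc ‖quadPert a b ε z - 1‖ = ‖a * ((ε : ℂ) * z) ^ 2 + b * ((ε : ℂ) / z) ^ 2‖ := by
        congr 1; simp only [quadPert]; ring
    _ ≤ ‖a‖ * K ^ 2 + ‖b‖ * K ^ 2 := by
        refine (norm_add_le _ _).trans (add_le_add ?_ ?_) <;>
          rw [norm_mul, norm_pow] <;> gcongr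
    _ ≤ 1 / 2 := by linarith

theorem norm_cpow_ofReal_le_of_norm_sub_one_le {q : ℂ} (hq : ‖q - 1‖ ≤ 1 / 2) (h : ℝ) :
    ‖q ^ (h : ℂ)‖ ≤ 2 ^ |h| := by
  have hlo : 2⁻¹ ≤ ‖q‖ := by
    have := norm_sub_norm_le (1 : ℂ) (1 - q)
    rw [norm_one, sub_sub_cancel, norm_sub_rev] at this
    linarith
  have hhi : ‖q‖ ≤ 2 := by
    have := norm_le_norm_add_norm_sub' q 1
    rw [norm_one] at this
    linarith
  rw [norm_cpow_real]
  rcases le_or_gt 0 h with hh | hh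
  · rw [abs_of_nonneg hh]
    exact Real.rpow_le_rpow (norm_nonneg _) hhi hh
  · rw [abs_of_neg hh]
    calc ‖q‖ ^ h = ‖q‖⁻¹ ^ (-h) := by
          rw [Real.inv_rpow (norm_nonneg _), Real.rpow_neg (norm_nonneg _), inv_inv]
      _ ≤ 2 ^ (-h) :=
          Real.rpow_le_rpow (by positivity) (inv_le_of_inv_le₀ (by norm_num) hlo) (by linarith)

theorem differentiableAt_cpow_quadPert {a b : ℂ} {ε : ℝ} {z : ℂ} (hz : z ≠ 0)
    (hq : ‖quadPert a b ε z - 1‖ < 1) (h : ℂ) :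
    DifferentiableAt ℂ (fun z => quadPert a b ε z ^ h) z := by
  have hslit : quadPert a b ε z ∈ slitPlane := by
    simpa using mem_slitPlane_of_norm_lt_one hq
  refine DifferentiableAt.cpow_const ?_ hslit
  unfold quadPert
  fun_prop (disch := exact pow_ne_zero _ hz)

theorem isBigO_circleCoeff_cpow_quadPert (a b : ℂ) (h : ℝ) (k : ℕ) :
    (fun ε : ℝ => circleCoeff (fun z => quadPert a b ε z ^ (h : ℂ)) k)
      =O[𝓝[>] 0] fun ε : ℝ => ε ^ k := by
  set K : ℝ := (2 * (‖a‖ + ‖b‖ + 1))⁻¹ with hKdef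
  have hK0 : 0 < K := by positivity
  have hK : K ^ 2 * (‖a‖ + ‖b‖) ≤ 1 / 2 := by
    rw [hKdef, inv_pow, inv_mul_le_iff₀ (by positivity)]
    nlinarith [norm_nonneg a, norm_nonneg b]
  refine isBigO_iff.mpr ⟨2 * π * 2 ^ |h| / K ^ k, ?_⟩
  filter_upwards [Ioo_mem_nhdsGT hK0] with ε ⟨hε, hεK⟩
  have hR : 1 ≤ K / ε := (one_le_div hε).mpr hεK.le
  have hannulus : ∀ z : ℂ, 1 ≤ ‖z‖ → ‖z‖ ≤ K / ε → ‖quadPert a b ε z - 1‖ ≤ 1 / 2 :=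
    fun z h1 h2 => norm_quadPert_sub_one_le hK hε.le hεK.le h1
      (by rwa [le_div_iff₀ hε, mul_comm] at h2)
  have hcoeff := norm_circleCoeff_le (f := fun z => quadPert a b ε z ^ (h : ℂ)) hR
    (fun z h1 h2 => differentiableAt_cpow_quadPert (norm_pos_iff.mp (one_pos.trans_le h1))
      ((hannulus z h1 h2).trans_lt (by norm_num)) _)
    (fun z hz => norm_cpow_ofReal_le_of_norm_sub_one_le (hannulus z (hz ▸ hR) hz.le) h) k
  calc _ ≤ 2 * π * 2 ^ |h| / (K / ε) ^ k := hcoeff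
    _ = 2 * π * 2 ^ |h| / K ^ k * ‖ε ^ k‖ := by
        rw [norm_pow, Real.norm_of_nonneg hε.le, div_pow]
        field_simp

theorem isBigO_circleCoeff_cpow_quadPert_int (a b : ℂ) (h : ℝ) (k : ℤ) :
    (fun ε : ℝ => circleCoeff (fun z => quadPert a b ε z ^ (h : ℂ)) k)
      =O[𝓝[>] 0] fun ε : ℝ => ε ^ k.natAbs := by
  obtain ⟨N, rfl | rfl⟩ := Int.eq_nat_or_neg k
  · exact isBigO_circleCoeff_cpow_quadPert a b h N
  · rw [Int.natAbs_neg, Int.natAbs_natCast]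
    refine (isBigO_circleCoeff_cpow_quadPert b a h N).congr_left fun ε => ?_
    simp only [← quadPert_inv a b, ← circleCoeff_comp_inv (fun z => quadPert a b ε z ^ (h : ℂ))]

theorem exp_neg_intCast_mul_mul_I (k : ℤ) (θ : ℝ) : exp (-(k * θ) * I) = exp (θ * I) ^ (-k) := by
  rw [← exp_int_mul]; push_cast; ring_nf

theorem stmt6_general (w : ℂ) (h : ℝ)
    (d : ℝ → ℝ → ℂ)
    (hd : ∀ ε θ : ℝ, d ε θ = 1 + ((ε : ℂ) ^ 2 / 16) *
        (Complex.exp (2 * (θ : ℂ) * Complex.I) / w ^ 2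
          + Complex.exp (-(2 * (θ : ℂ)) * Complex.I) / (starRingEnd ℂ w) ^ 2)) :
    (∀ ε : ℝ, 0 < ε → (∀ θ : ℝ, d ε θ ∈ Complex.slitPlane) →
      ∀ m : ℤ,
        ∫ θ in (0 : ℝ)..(2 * π),
          Complex.exp (-((2 * (m : ℂ) + 1) * (θ : ℂ)) * Complex.I) * (d ε θ) ^ (h : ℂ) = 0) ∧
    (∀ n : ℤ, n ≠ 0 →
      (fun ε : ℝ => ∫ θ in (0 : ℝ)..(2 * π),
          Complex.exp (-(2 * (n : ℂ) * (θ : ℂ)) * Complex.I) * (d ε θ) ^ (h : ℂ))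
        =O[nhdsWithin 0 (Set.Ioi 0)] (fun ε : ℝ => ε ^ (2 * n.natAbs))) := by
  set a : ℂ := (w ^ 2)⁻¹ / 16
  set b : ℂ := (starRingEnd ℂ w ^ 2)⁻¹ / 16
  have hcoeff : ∀ (ε : ℝ) (k : ℤ) (c : ℂ), c = k →
      ∫ θ in (0 : ℝ)..(2 * π), exp (-(c * θ) * I) * d ε θ ^ (h : ℂ)
        = circleCoeff (fun z => quadPert a b ε z ^ (h : ℂ)) k := by
    intro ε k c hc
    refine intervalIntegral.integral_congr fun θ _ => ?_
    have h2 : exp (2 * θ * I) = exp (θ * I) ^ 2 := by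
      rw [← Complex.exp_nat_mul]; push_cast; ring_nf
    have hm2 : exp (-(2 * θ) * I) = (exp (θ * I) ^ 2)⁻¹ := by
      rw [← h2, ← Complex.exp_neg]; ring_nf
    simp only [hc, exp_neg_intCast_mul_mul_I, hd, h2, hm2, quadPert, a, b]
    congr 2
    ring
  refine ⟨fun ε _ _ m => ?_, fun n _ => ?_⟩
  · rw [hcoeff ε (2 * m + 1) _ (by push_cast; ring)]
    exact circleCoeff_eq_zero_of_odd (fun z => by rw [quadPert_neg]) (odd_two_mul_add_one m)
  · have hO := isBigO_circleCoeff_cpow_quadPert_int a b h (2 * n)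
    rw [Int.natAbs_mul] at hO
    exact hO.congr_left fun ε => (hcoeff ε _ _ (by push_cast; ring)).symm

/-- Fourier coefficients of `θ ↦ (g'_{w,ε,θ}(0))^h` where
`g'_{w,ε,θ}(0) = 1 + (ε²/16)(e^{2iθ}/w² + e^{-2iθ}/w̄²)`:
(i) all odd Fourier coefficients vanish exactly (for `ε` small enough that the base
avoids the nonpositive real axis for all `θ`);
(ii) for each nonzero integer `n`, the `2n`-th Fourier coefficient is `O(ε^{2|n|})`
as `ε → 0⁺`. -/
theorem stmt6 (w : ℂ) (hw : 0 < w.im) (h : ℝ)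
    (d : ℝ → ℝ → ℂ)
    (hd : ∀ ε θ : ℝ, d ε θ = 1 + ((ε : ℂ) ^ 2 / 16) *
        (Complex.exp (2 * (θ : ℂ) * Complex.I) / w ^ 2
          + Complex.exp (-(2 * (θ : ℂ)) * Complex.I) / (starRingEnd ℂ w) ^ 2)) :
    (∀ ε : ℝ, 0 < ε → (∀ θ : ℝ, d ε θ ∈ Complex.slitPlane) →
      ∀ m : ℤ,
        ∫ θ in (0 : ℝ)..(2 * π),
          Complex.exp (-((2 * (m : ℂ) + 1) * (θ : ℂ)) * Complex.I) * (d ε θ) ^ (h : ℂ) = 0) ∧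
    (∀ n : ℤ, n ≠ 0 →
      (fun ε : ℝ => ∫ θ in (0 : ℝ)..(2 * π),
          Complex.exp (-(2 * (n : ℂ) * (θ : ℂ)) * Complex.I) * (d ε θ) ^ (h : ℂ))
        =O[nhdsWithin 0 (Set.Ioi 0)] (fun ε : ℝ => ε ^ (2 * n.natAbs))) :=
  stmt6_general w h d hd
end

section
/- Let w ∈ ℍ, b ≥ 1, and θ, α ∈ ℝ. Then, as ε → 0⁺, g_{w,ε,θ}(w + (bε/4)e^{i(α+θ)}) = w + (ε/4)e^{i(θ+π/2)}(b + 1/b)·sin α + (ε/4)e^{iθ}(b − 1/b)·cos α − (ε²/16)·e^{2iθ}/w − (ε²/16)·e^{−2iθ}/w̄ + (ε²/16)·e^{−2iθ}/(w̄ − w) + O(ε³). In particular, to leading order in ε the image of the circle of radius bε/4 centered at w is an ellipse centered at w with major axis (b + 1/b)ε/2 (making angle θ with the positive imaginary direction) and minor axis (b − 1/b)ε/2. -/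
open Complex Real Filter Asymptotics Topology

/-!
Write the point as `w + r K` with `r = bε/4` and `K = e^{i(α+θ)}`. The pole of `g` at `w`
contributes `r K - (ε²/16) e^{2iθ} / (r K)`, the Joukowski map applied to a circle, which is
exactly the ellipse. The pole at `w̄` contributes `(ε²/16) e^{-2iθ} / (w̄ - w - r K)`; since
`w̄ ≠ w` this differs by `O(ε)` from its value at `r = 0`, giving the `O(ε³)` error.
-/

theorem mul_exp_mul_I_sub_inv_mul_exp_neg (b : ℂ) (α : ℝ) :
    b * exp (α * I) - b⁻¹ * exp (-(α * I))
      = I * (b + 1 / b) * (Real.sin α : ℂ) + (b - 1 / b) * (Real.cos α : ℂ) := by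
  rw [show -((α : ℂ) * I) = ((-α : ℝ) : ℂ) * I by push_cast; ring, exp_mul_I, exp_mul_I]
  push_cast
  rw [Complex.cos_neg, Complex.sin_neg]
  ring_nf

theorem joukowski_circle_eq_ellipse (b : ℂ) {ε : ℝ} (hε : ε ≠ 0) (θ α : ℝ) :
    (b * ε / 4) * exp ((α + θ) * I)
        - (ε ^ 2 / 16) * exp (2 * θ * I) / ((b * ε / 4) * exp ((α + θ) * I))
      = (ε / 4) * exp ((θ + π / 2) * I) * (b + 1 / b) * (Real.sin α : ℂ)
        + (ε / 4) * exp (θ * I) * (b - 1 / b) * (Real.cos α : ℂ) := by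
  have hε' : (ε : ℂ) ≠ 0 := by exact_mod_cast hε
  have hsum : exp ((α + θ) * I) = exp (α * I) * exp (θ * I) := by
    rw [← Complex.exp_add]; ring_nf
  have hdouble : exp (2 * θ * I) = exp (θ * I) ^ 2 := by rw [← Complex.exp_nat_mul]; ring_nf
  have hquarter : exp ((θ + π / 2) * I) = exp (θ * I) * I := by
    rw [add_mul, Complex.exp_add, exp_pi_div_two_mul_I]
  have hquot : (ε ^ 2 / 16) * exp (θ * I) ^ 2 / ((b * ε / 4) * (exp (α * I) * exp (θ * I)))
      = (ε / 4) * exp (θ * I) * (b⁻¹ * exp (-(α * I))) := by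
    rw [Complex.exp_neg]
    field_simp
    norm_num
  rw [hsum, hdouble, hquarter, hquot]
  linear_combination (ε / 4 : ℂ) * exp (θ * I) * mul_exp_mul_I_sub_inv_mul_exp_neg b α

theorem isBigO_inv_sub_mul_sub_inv {A : ℂ} (hA : A ≠ 0) (c : ℂ) :
    (fun ε : ℝ => (A - c * ε)⁻¹ - A⁻¹) =O[𝓝 0] fun ε => ε := by
  have hd : DifferentiableAt ℝ (fun ε : ℝ => (A - c * ε)⁻¹) 0 :=
    (by fun_prop : DifferentiableAt ℝ (fun ε : ℝ => A - c * ε) 0).inv (by simpa using hA)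
  simpa using hd.hasFDerivAt.isBigO_sub

theorem isBigO_sq_mul_inv_sub_mul_sub_inv {A : ℂ} (hA : A ≠ 0) (c k : ℂ) :
    (fun ε : ℝ => (ε : ℂ) ^ 2 * (c * ((A - k * ε)⁻¹ - A⁻¹))) =O[𝓝 0] fun ε => ε ^ 3 := by
  have hsq : (fun ε : ℝ => (ε : ℂ) ^ 2) =O[𝓝 0] fun ε => ε ^ 2 :=
    isBigO_of_le _ fun ε => by simp
  simpa [pow_succ] using hsq.mul ((isBigO_inv_sub_mul_sub_inv hA k).const_mul_left c)

theorem stmt7_general (w : ℂ) (hw : 0 < w.im) (b : ℝ) (θ α : ℝ)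
    (g : ℝ → ℂ → ℂ)
    (hg : ∀ (ε : ℝ) (z : ℂ), g ε z = z
        + ((ε : ℂ) ^ 2 / 16) * Complex.exp (2 * (θ : ℂ) * Complex.I) / (w - z)
        + ((ε : ℂ) ^ 2 / 16) * Complex.exp (-(2 * (θ : ℂ)) * Complex.I) / (starRingEnd ℂ w - z)
        - ((ε : ℂ) ^ 2 / 16) * Complex.exp (2 * (θ : ℂ) * Complex.I) / w
        - ((ε : ℂ) ^ 2 / 16) * Complex.exp (-(2 * (θ : ℂ)) * Complex.I) / starRingEnd ℂ w) :
    (fun ε : ℝ =>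
        g ε (w + ((b : ℂ) * (ε : ℂ) / 4) * Complex.exp (((α : ℂ) + (θ : ℂ)) * Complex.I))
          - (w
            + ((ε : ℂ) / 4) * Complex.exp (((θ : ℂ) + (π : ℂ) / 2) * Complex.I)
                * ((b : ℂ) + 1 / (b : ℂ)) * (Real.sin α : ℂ)
            + ((ε : ℂ) / 4) * Complex.exp ((θ : ℂ) * Complex.I)
                * ((b : ℂ) - 1 / (b : ℂ)) * (Real.cos α : ℂ)
            - ((ε : ℂ) ^ 2 / 16) * Complex.exp (2 * (θ : ℂ) * Complex.I) / w
            - ((ε : ℂ) ^ 2 / 16) * Complex.exp (-(2 * (θ : ℂ)) * Complex.I) / starRingEnd ℂ w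
            + ((ε : ℂ) ^ 2 / 16) * Complex.exp (-(2 * (θ : ℂ)) * Complex.I)
                / (starRingEnd ℂ w - w)))
      =O[nhdsWithin 0 (Set.Ioi 0)] (fun ε : ℝ => ε ^ 3) := by
  set A := starRingEnd ℂ w - w
  set K := Complex.exp (((α : ℂ) + (θ : ℂ)) * Complex.I)
  have hA : A ≠ 0 := by
    intro h
    have := congrArg Complex.im h
    simp [A] at this
    linarith
  refine (isBigO_sq_mul_inv_sub_mul_sub_inv hA (Complex.exp (-(2 * (θ : ℂ)) * I) / 16)
    (b * K / 4) |>.mono nhdsWithin_le_nhds).congr' ?_ .rfl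
  filter_upwards [self_mem_nhdsWithin] with ε (hε : 0 < ε)
  rw [hg, show w - (w + (b : ℂ) * ε / 4 * K) = -((b : ℂ) * ε / 4 * K) by ring,
    show starRingEnd ℂ w - (w + (b : ℂ) * ε / 4 * K) = A - (b : ℂ) * K / 4 * ε by ring]
  linear_combination -joukowski_circle_eq_ellipse b hε.ne' θ α

/-- Expansion of `g_{w,ε,θ}(w + (bε/4)e^{i(α+θ)})` as `ε → 0⁺`: the image of the circle
of radius `bε/4` centered at `w` is, to order `ε³`, an ellipse centered at `w` (shifted
by explicit `ε²` terms) with major axis `(b+1/b)ε/2` at angle `θ` to the positive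
imaginary direction and minor axis `(b-1/b)ε/2`. -/
theorem stmt7 (w : ℂ) (hw : 0 < w.im) (b : ℝ) (hb : 1 ≤ b) (θ α : ℝ)
    (g : ℝ → ℂ → ℂ)
    (hg : ∀ (ε : ℝ) (z : ℂ), g ε z = z
        + ((ε : ℂ) ^ 2 / 16) * Complex.exp (2 * (θ : ℂ) * Complex.I) / (w - z)
        + ((ε : ℂ) ^ 2 / 16) * Complex.exp (-(2 * (θ : ℂ)) * Complex.I) / (starRingEnd ℂ w - z)
        - ((ε : ℂ) ^ 2 / 16) * Complex.exp (2 * (θ : ℂ) * Complex.I) / w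
        - ((ε : ℂ) ^ 2 / 16) * Complex.exp (-(2 * (θ : ℂ)) * Complex.I) / starRingEnd ℂ w) :
    (fun ε : ℝ =>
        g ε (w + ((b : ℂ) * (ε : ℂ) / 4) * Complex.exp (((α : ℂ) + (θ : ℂ)) * Complex.I))
          - (w
            + ((ε : ℂ) / 4) * Complex.exp (((θ : ℂ) + (π : ℂ) / 2) * Complex.I)
                * ((b : ℂ) + 1 / (b : ℂ)) * (Real.sin α : ℂ)
            + ((ε : ℂ) / 4) * Complex.exp ((θ : ℂ) * Complex.I)
                * ((b : ℂ) - 1 / (b : ℂ)) * (Real.cos α : ℂ)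
            - ((ε : ℂ) ^ 2 / 16) * Complex.exp (2 * (θ : ℂ) * Complex.I) / w
            - ((ε : ℂ) ^ 2 / 16) * Complex.exp (-(2 * (θ : ℂ)) * Complex.I) / starRingEnd ℂ w
            + ((ε : ℂ) ^ 2 / 16) * Complex.exp (-(2 * (θ : ℂ)) * Complex.I)
                / (starRingEnd ℂ w - w)))
      =O[nhdsWithin 0 (Set.Ioi 0)] (fun ε : ℝ => ε ^ 3) :=
  stmt7_general w hw b θ α g hg
end

section
/- Let w ∈ ℍ and θ ∈ ℝ. Then there exist ε₀ > 0 and functions z₊, z₋ : (0, ε₀) → ℂ such that for all ε ∈ (0, ε₀), z₊(ε) and z₋(ε) are critical points of g_{w,ε,θ} (i.e. g'_{w,ε,θ}(z±(ε)) = 0), and z₊(ε) = w + i(ε/4)e^{iθ} + O(ε²), z₋(ε) = w − i(ε/4)e^{iθ} + O(ε²) as ε → 0⁺. (These are the branch points of g_{w,ε,θ} in the upper half-plane, which any admissible domain D_{w,ε} must contain.) -/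
open Complex Filter Asymptotics Topology

/-!
Near `w` the derivative `g'` has a double pole, so we rescale: for `z = w + (ε/4) e^{iθ} v` the
term `(ε²/16) e^{2iθ} / (w - z)²` equals `1 / v²`, and clearing denominators turns `g'(z) = 0` into
the polynomial equation `branchEquation (w̄ - w) e^{iθ} (ε, v) = 0`. At `ε = 0` it reads
`(v² + 1)(w̄ - w)² = 0`, whose roots `v = ±i` are simple, so the implicit function theorem gives
roots `v±(ε) = ±i + O(ε)`, that is `z±(ε) = w ± i(ε/4)e^{iθ} + O(ε²)`. Letting `ε` range over `ℂ`
makes this the holomorphic implicit function theorem for a polynomial in two variables.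
-/

theorem exists_implicitFunction_sub_isBigO {𝕜 E : Type*} [NontriviallyNormedField 𝕜]
    [CompleteSpace 𝕜] [NormedAddCommGroup E] [NormedSpace 𝕜 E] [CompleteSpace E]
    {f : E × 𝕜 → 𝕜} {f' : E × 𝕜 →L[𝕜] 𝕜} {x₀ : E} {y₀ d : 𝕜}
    (hf : HasStrictFDerivAt f f' (x₀, y₀)) (hd : HasDerivAt (fun y => f (x₀, y)) d y₀)
    (hd₀ : d ≠ 0) :
    ∃ ψ : E → 𝕜, (∀ᶠ x in 𝓝 x₀, f (x, ψ x) = f (x₀, y₀)) ∧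
      (fun x => ψ x - y₀) =O[𝓝 x₀] fun x => x - x₀ := by
  have hpartial : f' ∘L .inr 𝕜 E 𝕜 = ContinuousLinearEquiv.unitsEquivAut 𝕜 (Units.mk0 d hd₀) := by
    rw [(hf.hasFDerivAt.comp y₀ (hasFDerivAt_prodMk_right x₀ y₀)).unique hd.hasFDerivAt]
    ext; simp
  have hinv : (f' ∘L .inr 𝕜 E 𝕜).IsInvertible := hpartial ▸ ContinuousLinearMap.isInvertible_equiv
  refine ⟨hf.implicitFunctionOfProdDomain hinv,
    hf.eventually_apply_implicitFunctionOfProdDomain hinv, ?_⟩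
  have h₀ := eq_of_tendsto_nhds (hf.tendsto_implicitFunctionOfProdDomain hinv)
  simpa [h₀] using (hf.hasStrictFDerivAt_implicitFunctionOfProdDomain hinv).hasFDerivAt.isBigO_sub

theorem hasDerivAt_add_div_sub_add_div_sub {A B b₁ b₂ z : ℂ} (h₁ : b₁ - z ≠ 0)
    (h₂ : b₂ - z ≠ 0) :
    HasDerivAt (fun z => z + A / (b₁ - z) + B / (b₂ - z))
      (1 + A / (b₁ - z) ^ 2 + B / (b₂ - z) ^ 2) z := by
  have hdiv : ∀ {C b : ℂ}, b - z ≠ 0 → HasDerivAt (fun z => C / (b - z)) (C / (b - z) ^ 2) z :=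
    fun hb => ((hasDerivAt_const _ _).div ((hasDerivAt_id' z).const_sub _) hb).congr_deriv
      (by ring)
  exact ((hasDerivAt_id' z).add (hdiv h₁)).add (hdiv h₂)

noncomputable def branchEquation (a ζ : ℂ) (p : ℂ × ℂ) : ℂ :=
  (p.2 ^ 2 + 1) * (a - p.1 * ζ / 4 * p.2) ^ 2 + (p.1 / (4 * ζ)) ^ 2 * p.2 ^ 2

theorem contDiff_branchEquation (a ζ : ℂ) : ContDiff ℂ 1 (branchEquation a ζ) := by
  unfold branchEquation; fun_prop

theorem hasDerivAt_branchEquation_zero (a ζ v : ℂ) :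
    HasDerivAt (fun v => branchEquation a ζ (0, v)) (2 * v * a ^ 2) v := by
  have h : (fun v => branchEquation a ζ (0, v)) = fun v => (v ^ 2 + 1) * a ^ 2 := by
    ext; simp [branchEquation]
  exact h ▸ (((hasDerivAt_pow 2 v).add_const 1).mul_const (a ^ 2)).congr_deriv (by ring)

theorem exists_branchEquation_root {a v₀ : ℂ} (ζ : ℂ) (ha : a ≠ 0) (hv₀ : v₀ ^ 2 = -1) :
    ∃ ψ : ℂ → ℂ, (∀ᶠ ε in 𝓝 0, branchEquation a ζ (ε, ψ ε) = 0) ∧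
      (fun ε => ψ ε - v₀) =O[𝓝 0] fun ε => ε := by
  have hv₀ne : v₀ ≠ 0 := by rintro rfl; norm_num at hv₀
  have hroot : branchEquation a ζ (0, v₀) = 0 := by simp [branchEquation, hv₀]
  obtain ⟨ψ, hψ, hO⟩ := exists_implicitFunction_sub_isBigO
    ((contDiff_branchEquation a ζ).contDiffAt.hasStrictFDerivAt one_ne_zero)
    (hasDerivAt_branchEquation_zero a ζ v₀) (by simp [ha, hv₀ne])
  exact ⟨ψ, by simpa only [hroot] using hψ, by simpa using hO⟩

theorem one_add_div_sq_add_div_sq_eq_zero_of_branchEquation {w b ζ ε v : ℂ} (hε : ε ≠ 0)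
    (hζ : ζ ≠ 0) (hv : v ≠ 0) (hb : b - (w + ε * ζ / 4 * v) ≠ 0)
    (h : branchEquation (b - w) ζ (ε, v) = 0) :
    1 + ε ^ 2 / 16 * ζ ^ 2 / (w - (w + ε * ζ / 4 * v)) ^ 2
      + ε ^ 2 / 16 * (ζ ^ 2)⁻¹ / (b - (w + ε * ζ / 4 * v)) ^ 2 = 0 := by
  have hw : w - (w + ε * ζ / 4 * v) = -(ε * ζ / 4 * v) := by ring
  have h' : (v ^ 2 + 1) * (b - (w + ε * ζ / 4 * v)) ^ 2 + (ε / (4 * ζ)) ^ 2 * v ^ 2 = 0 := by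
    rw [← h, branchEquation]; ring
  rw [hw]
  generalize b - (w + ε * ζ / 4 * v) = d at hb h' ⊢
  field_simp at h' ⊢
  linear_combination h'

theorem exists_critical_curve {w b ζ v₀ : ℂ} (hb : b ≠ w) (hζ : ζ ≠ 0)
    (hv₀ : v₀ ^ 2 = -1) :
    ∃ z : ℂ → ℂ, (∀ᶠ ε in 𝓝[≠] 0, w - z ε ≠ 0 ∧ b - z ε ≠ 0 ∧
        1 + ε ^ 2 / 16 * ζ ^ 2 / (w - z ε) ^ 2 + ε ^ 2 / 16 * (ζ ^ 2)⁻¹ / (b - z ε) ^ 2 = 0) ∧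
      (fun ε => z ε - (w + ε / 4 * ζ * v₀)) =O[𝓝 0] fun ε => ε ^ 2 := by
  have hv₀ne : v₀ ≠ 0 := by rintro rfl; norm_num at hv₀
  obtain ⟨ψ, hroot, hO⟩ := exists_branchEquation_root ζ (sub_ne_zero.2 hb) hv₀
  have hψ : Tendsto ψ (𝓝 0) (𝓝 v₀) :=
    tendsto_sub_nhds_zero_iff.1 (hO.trans_tendsto tendsto_id)
  have hz : Tendsto (fun ε => w + ε * ζ / 4 * ψ ε) (𝓝 0) (𝓝 w) := by
    simpa using tendsto_const_nhds.add (((tendsto_id.mul_const ζ).div_const 4).mul hψ)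
  refine ⟨fun ε => w + ε * ζ / 4 * ψ ε, ?_, ?_⟩
  · filter_upwards [self_mem_nhdsWithin, nhdsWithin_le_nhds (hroot.and
      ((hψ.eventually_ne hv₀ne).and (hz.eventually_ne hb.symm)))]
      with ε (hε : ε ≠ 0) ⟨hε_root, hψε, hzε⟩
    have hbz : b - (w + ε * ζ / 4 * ψ ε) ≠ 0 := sub_ne_zero.2 (Ne.symm hzε)
    refine ⟨by simp [hε, hζ, hψε], hbz, ?_⟩
    exact one_add_div_sq_add_div_sq_eq_zero_of_branchEquation hε hζ hψε hbz hε_root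
  · exact ((isBigO_const_mul_self (ζ / 4) (fun ε => ε) _).mul hO).congr
      (fun ε => by ring) fun ε => by ring

/-- For small `ε > 0`, the map `g_{w,ε,θ}` has two critical points (branch points)
`z₊(ε) = w + i(ε/4)e^{iθ} + O(ε²)` and `z₋(ε) = w - i(ε/4)e^{iθ} + O(ε²)` in the
upper half-plane. -/
theorem stmt8 (w : ℂ) (hw : 0 < w.im) (θ : ℝ)
    (g : ℝ → ℂ → ℂ)
    (hg : ∀ (ε : ℝ) (z : ℂ), g ε z = z
        + ((ε : ℂ) ^ 2 / 16) * Complex.exp (2 * (θ : ℂ) * Complex.I) / (w - z)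
        + ((ε : ℂ) ^ 2 / 16) * Complex.exp (-(2 * (θ : ℂ)) * Complex.I) / (starRingEnd ℂ w - z)
        - ((ε : ℂ) ^ 2 / 16) * Complex.exp (2 * (θ : ℂ) * Complex.I) / w
        - ((ε : ℂ) ^ 2 / 16) * Complex.exp (-(2 * (θ : ℂ)) * Complex.I) / starRingEnd ℂ w) :
    ∃ ε₀ : ℝ, 0 < ε₀ ∧ ∃ zp zm : ℝ → ℂ,
      (∀ ε ∈ Set.Ioo (0 : ℝ) ε₀, deriv (g ε) (zp ε) = 0 ∧ deriv (g ε) (zm ε) = 0) ∧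
      ((fun ε : ℝ => zp ε - (w + Complex.I * ((ε : ℂ) / 4) * Complex.exp ((θ : ℂ) * Complex.I)))
        =O[nhdsWithin 0 (Set.Ioi 0)] fun ε : ℝ => ε ^ 2) ∧
      ((fun ε : ℝ => zm ε - (w - Complex.I * ((ε : ℂ) / 4) * Complex.exp ((θ : ℂ) * Complex.I)))
        =O[nhdsWithin 0 (Set.Ioi 0)] fun ε : ℝ => ε ^ 2) := by
  set ζ := exp (θ * I)
  have hζ2 : exp (2 * θ * I) = ζ ^ 2 := by rw [← exp_nat_mul]; ring_nf
  have hζm2 : exp (-(2 * θ) * I) = (ζ ^ 2)⁻¹ := by rw [← hζ2, ← exp_neg]; ring_nf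
  have hderiv : ∀ (ε : ℝ) z, w - z ≠ 0 → starRingEnd ℂ w - z ≠ 0 → deriv (g ε) z =
      1 + (ε : ℂ) ^ 2 / 16 * ζ ^ 2 / (w - z) ^ 2
        + (ε : ℂ) ^ 2 / 16 * (ζ ^ 2)⁻¹ / (starRingEnd ℂ w - z) ^ 2 := fun ε z h₁ h₂ => by
    rw [show g ε = _ from funext (hg ε), hζ2, hζm2]
    exact ((hasDerivAt_add_div_sub_add_div_sub h₁ h₂).sub_const
      _ |>.sub_const _).deriv
  have hb : starRingEnd ℂ w ≠ w := fun h => hw.ne' (conj_eq_iff_im.1 h)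
  obtain ⟨zp, hp, hpO⟩ := exists_critical_curve hb (exp_ne_zero _) I_sq
  obtain ⟨zm, hm, hmO⟩ := exists_critical_curve hb (exp_ne_zero _) (by rw [neg_sq, I_sq])
  have hreal : Tendsto ((↑) : ℝ → ℂ) (𝓝[>] 0) (𝓝[≠] 0) :=
    tendsto_nhdsWithin_of_tendsto_nhds_of_eventually_within _
      (continuous_ofReal.tendsto' 0 0 ofReal_zero |>.mono_left nhdsWithin_le_nhds)
      (eventually_nhdsWithin_of_forall fun ε (hε : 0 < ε) => ofReal_ne_zero.2 hε.ne')
  have hsq : (fun ε : ℝ => (ε : ℂ) ^ 2) =O[𝓝[>] 0] fun ε => ε ^ 2 :=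
    isBigO_of_le _ fun ε => by simp
  obtain ⟨ε₀, hε₀, hsub⟩ := mem_nhdsGT_iff_exists_Ioo_subset.1 (hreal.eventually (hp.and hm))
  refine ⟨ε₀, hε₀, fun ε => zp ε, fun ε => zm ε, fun ε hε => ?_, ?_, ?_⟩
  · obtain ⟨⟨hp₁, hp₂, hp₃⟩, hm₁, hm₂, hm₃⟩ := hsub hε
    rw [hderiv ε _ hp₁ hp₂, hderiv ε _ hm₁ hm₂]
    exact ⟨hp₃, hm₃⟩
  · exact ((hpO.comp_tendsto (hreal.mono_right nhdsWithin_le_nhds)).trans hsq).congr_left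
      fun ε => by simp only [Function.comp]; ring
  · exact ((hmO.comp_tendsto (hreal.mono_right nhdsWithin_le_nhds)).trans hsq).congr_left
      fun ε => by simp only [Function.comp]; ring
end

section
/- Let x ∈ ℝ and ε > 0, and define g_{x,ε}(z) = z + ε²/(4(x − z)). Then: (i) for every φ ∈ [0, π], g_{x,ε}(x + (ε/2)e^{iφ}) = x + i·ε·sin φ, so g_{x,ε} maps the semicircle {x + (ε/2)e^{iφ} : 0 ≤ φ ≤ π} onto the vertical segment from x to x + iε; (ii) g_{x,ε} maps ℝ ∖ {x} into ℝ; and (iii) g_{x,ε} restricted to U = {z ∈ ℍ : |z − x| > ε/2} is a holomorphic bijection from U onto ℍ ∖ {x + it : 0 < t ≤ ε}. -/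
open Complex Real

lemma exists_sq' (c : ℂ) : ∃ s : ℂ, s^2 = c := by
  by_cases h : c = 0
  · exact ⟨0, by simp [h]⟩
  · refine ⟨Complex.exp (Complex.log c / 2), ?_⟩
    rw [sq, ← Complex.exp_add]
    rw [show Complex.log c / 2 + Complex.log c / 2 = Complex.log c by ring]
    exact Complex.exp_log h

lemma abs_gt_of_normSq_gt' {ε : ℝ} {a : ℂ} (hε : 0 < ε) (h : ε^2/4 < Complex.normSq a) :
    ε/2 < ‖a‖ := by
  by_contra hc
  push_neg at hc
  have h1 : Complex.normSq a = (‖a‖)^2 := (Complex.sq_norm a).symm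
  nlinarith [norm_nonneg a]

lemma normSq_gt_of_abs_gt' {ε : ℝ} {a : ℂ} (h : ε/2 < ‖a‖) (h2 : 0 ≤ ε) :
    ε^2/4 < Complex.normSq a := by
  have h1 : Complex.normSq a = (‖a‖)^2 := (Complex.sq_norm a).symm
  nlinarith

lemma im_aux' (r : ℝ) (z w : ℂ) : (z - (r:ℂ)*w⁻¹).im = z.im + r * w.im / Complex.normSq w := by
  simp [Complex.sub_im, Complex.mul_im, Complex.inv_im]
  ring

lemma re_aux' (r : ℝ) (z w : ℂ) : (z - (r:ℂ)*w⁻¹).re = z.re - r * w.re / Complex.normSq w := by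
  simp [Complex.sub_re, Complex.mul_re, Complex.inv_re, Complex.inv_im]
  ring

lemma neg_inv_im' (r : ℝ) (w : ℂ) (hw : w ≠ 0) :
    (-(r:ℂ) * w⁻¹).im * Complex.normSq w = r * w.im := by
  have h := (Complex.normSq_pos.mpr hw).ne'
  simp [Complex.mul_im, Complex.inv_im, Complex.inv_re]
  field_simp

lemma grep' (x ε : ℝ) (g : ℂ → ℂ)
    (hg : ∀ z : ℂ, g z = z + (ε : ℂ) ^ 2 / (4 * ((x : ℂ) - z))) (z : ℂ) (hz : z - (x:ℂ) ≠ 0) :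
    g z = z - (((ε^2/4 : ℝ)):ℂ) * (z - (x:ℂ))⁻¹ := by
  have h0 : (x:ℂ) - z ≠ 0 := fun h => hz (by rw [← neg_sub]; simp [h])
  rw [hg]; push_cast; field_simp; ring

lemma gmaps' (x ε : ℝ) (hε : 0 < ε) (g : ℂ → ℂ)
    (hg : ∀ z : ℂ, g z = z + (ε : ℂ) ^ 2 / (4 * ((x : ℂ) - z))) :
    Set.MapsTo g {z : ℂ | 0 < z.im ∧ ε / 2 < ‖z - (x : ℂ)‖}
      ({z : ℂ | 0 < z.im} \
        {z : ℂ | ∃ t : ℝ, 0 < t ∧ t ≤ ε ∧ z = (x : ℂ) + (t : ℂ) * Complex.I}) := by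
  rintro z ⟨him, habs⟩
  set a := z - (x:ℂ) with ha
  have hns : ε^2/4 < Complex.normSq a := normSq_gt_of_abs_gt' habs hε.le
  have hns0 : 0 < Complex.normSq a := by nlinarith
  have ha0 : a ≠ 0 := by intro h; rw [h] at hns0; simp at hns0
  have hrep := grep' x ε g hg z ha0
  have haim : a.im = z.im := by simp [ha]
  have hare : a.re = z.re - x := by simp [ha]
  have hgim : (g z).im = z.im + (ε^2/4) * a.im / Complex.normSq a := by
    rw [hrep]; exact im_aux' _ _ _
  constructor
  · show 0 < (g z).im
    rw [hgim, haim]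
    have : 0 < (ε^2/4) * z.im / Complex.normSq a := by positivity
    linarith
  · rintro ⟨t, ht0, htε, heq⟩
    have hgre : (g z).re = z.re - (ε^2/4) * a.re / Complex.normSq a := by
      rw [hrep]; exact re_aux' _ _ _
    have hre : (g z).re = x := by rw [heq]; simp
    have him' : (g z).im = t := by rw [heq]; simp
    have hare0 : a.re = 0 := by
      rw [hgre] at hre
      have h1 : a.re * (1 - (ε^2/4) / Complex.normSq a) = 0 := by
        have hz : z.re = a.re + x := by rw [hare]; ring
        rw [hz] at hre
        field_simp at hre ⊢
        linarith [hre]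
      have h2 : (1 - (ε^2/4) / Complex.normSq a) ≠ 0 := by
        have : (ε^2/4) / Complex.normSq a < 1 := by
          rw [div_lt_one hns0]; exact hns
        intro h; rw [sub_eq_zero] at h; rw [← h] at this; linarith
      exact (mul_eq_zero.mp h1).resolve_right h2
    have hnsq : Complex.normSq a = a.im^2 := by
      rw [Complex.normSq_apply, hare0]; ring
    have haim0 : 0 < a.im := haim ▸ him
    have himgt : ε/2 < a.im := by
      rw [hnsq] at hns; nlinarith
    rw [hgim, ← haim, hnsq] at him'
    have ht : t = a.im + ε^2/(4*a.im) := by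
      rw [← him']; field_simp
    have : ε < t := by
      rw [ht]
      have h4 : 0 < 4*a.im := by linarith
      rw [show a.im + ε^2/(4*a.im) = (4*a.im^2 + ε^2)/(4*a.im) by field_simp]
      rw [lt_div_iff₀ h4]
      nlinarith [sq_nonneg (2*a.im - ε)]
    linarith

lemma ginj' (x ε : ℝ) (hε : 0 < ε) (g : ℂ → ℂ)
    (hg : ∀ z : ℂ, g z = z + (ε : ℂ) ^ 2 / (4 * ((x : ℂ) - z))) :
    Set.InjOn g {z : ℂ | 0 < z.im ∧ ε / 2 < ‖z - (x : ℂ)‖} := by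
  rintro z₁ ⟨him1, habs1⟩ z₂ ⟨him2, habs2⟩ hE
  have hns1 : ε^2/4 < Complex.normSq (z₁ - (x:ℂ)) := normSq_gt_of_abs_gt' habs1 hε.le
  have hns2 : ε^2/4 < Complex.normSq (z₂ - (x:ℂ)) := normSq_gt_of_abs_gt' habs2 hε.le
  have ha0' : (x:ℂ) - z₁ ≠ 0 := by
    intro h
    have : z₁ - (x:ℂ) = 0 := by rw [← neg_sub]; simp [h]
    rw [this] at hns1; simp at hns1; nlinarith
  have hb0' : (x:ℂ) - z₂ ≠ 0 := by
    intro h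
    have : z₂ - (x:ℂ) = 0 := by rw [← neg_sub]; simp [h]
    rw [this] at hns2; simp at hns2; nlinarith
  rw [hg, hg] at hE
  have key : (z₁ - z₂) * ((z₁ - (x:ℂ)) * (z₂ - (x:ℂ)) + (ε:ℂ)^2/4) = 0 := by
    field_simp at hE
    linear_combination (1/4 : ℂ) * hE
  rcases mul_eq_zero.mp key with h | h
  · exact sub_eq_zero.mp h
  · exfalso
    have h' : (z₁ - (x:ℂ)) * (z₂ - (x:ℂ)) = ((-(ε^2/4) : ℝ):ℂ) := by
      push_cast; linear_combination h
    have hns : Complex.normSq ((z₁ - (x:ℂ)) * (z₂ - (x:ℂ))) = (ε^2/4)^2 := by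
      rw [h', Complex.normSq_ofReal]; ring
    rw [map_mul] at hns
    nlinarith [Complex.normSq_nonneg (z₁ - (x:ℂ)), Complex.normSq_nonneg (z₂ - (x:ℂ)), sq_nonneg ε]

lemma gsurj' (x ε : ℝ) (hε : 0 < ε) (g : ℂ → ℂ)
    (hg : ∀ z : ℂ, g z = z + (ε : ℂ) ^ 2 / (4 * ((x : ℂ) - z))) :
    Set.SurjOn g {z : ℂ | 0 < z.im ∧ ε / 2 < ‖z - (x : ℂ)‖}
      ({z : ℂ | 0 < z.im} \
        {z : ℂ | ∃ t : ℝ, 0 < t ∧ t ≤ ε ∧ z = (x : ℂ) + (t : ℂ) * Complex.I}) := by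
  rintro u ⟨huim, hseg⟩
  simp only [Set.mem_setOf_eq] at huim hseg
  set b := u - (x:ℂ) with hb
  obtain ⟨s, hs⟩ := exists_sq' (b^2 + (ε:ℂ)^2)
  set a₁ := (b + s)/2 with ha₁
  set a₂ := (b - s)/2 with ha₂
  have hprod : a₁ * a₂ = -(((ε^2/4 : ℝ)):ℂ) := by
    rw [ha₁, ha₂]; push_cast; linear_combination (-(1:ℂ)/4) * hs
  have hsum : a₁ + a₂ = b := by rw [ha₁, ha₂]; ring
  have hq1 : a₁^2 - b*a₁ - (ε:ℂ)^2/4 = 0 := by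
    rw [ha₁]; linear_combination ((1:ℂ)/4) * hs
  have hq2 : a₂^2 - b*a₂ - (ε:ℂ)^2/4 = 0 := by
    rw [ha₂]; linear_combination ((1:ℂ)/4) * hs
  clear_value a₁ a₂ b
  clear hs ha₁ ha₂
  have hbim : b.im = u.im := by rw [hb]; simp
  have hε2 : ((ε^2/4 : ℝ):ℂ) ≠ 0 := by
    simp only [ne_eq, Complex.ofReal_eq_zero]; positivity
  have ha₁0 : a₁ ≠ 0 := by
    intro h; apply hε2
    have := hprod; rw [h, zero_mul] at this; exact neg_eq_zero.mp this.symm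
  have ha₂0 : a₂ ≠ 0 := by
    intro h; apply hε2
    have := hprod; rw [h, mul_zero] at this; exact neg_eq_zero.mp this.symm
  have hns1 : 0 < Complex.normSq a₁ := Complex.normSq_pos.mpr ha₁0
  have hns2 : 0 < Complex.normSq a₂ := Complex.normSq_pos.mpr ha₂0
  have ha₂rep : a₂ = -(((ε^2/4 : ℝ)):ℂ) * a₁⁻¹ := by
    rw [← hprod]; field_simp
  have him2 : a₂.im * Complex.normSq a₁ = (ε^2/4) * a₁.im := by
    rw [ha₂rep]; exact neg_inv_im' _ _ ha₁0
  have hsumim : a₁.im + a₂.im = b.im := by rw [← hsum]; simp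
  have him1pos : 0 < a₁.im := by
    by_contra hc
    push_neg at hc
    have h2 : a₂.im ≤ 0 := by
      by_contra h2c
      push_neg at h2c
      have p1 : 0 < a₂.im * Complex.normSq a₁ := mul_pos h2c hns1
      have p2 : (ε^2/4) * a₁.im ≤ 0 :=
        mul_nonpos_of_nonneg_of_nonpos (by positivity) hc
      linarith
    rw [hbim] at hsumim
    linarith
  have him2pos : 0 < a₂.im := by
    have p1 : 0 < (ε^2/4) * a₁.im := by positivity
    nlinarith
  have hnsprod : Complex.normSq a₁ * Complex.normSq a₂ = (ε^2/4)^2 := by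
    rw [← map_mul, hprod]
    simp [Complex.normSq_ofReal]
    ring
  have husol : ∀ a : ℂ, a ≠ 0 → a^2 - b*a - (ε:ℂ)^2/4 = 0 → g ((x:ℂ) + a) = u := by
    intro a h0 hq
    have hzx : ((x:ℂ) + a) - (x:ℂ) ≠ 0 := by simpa using h0
    rw [grep' x ε g hg _ hzx]
    rw [show ((x:ℂ) + a) - (x:ℂ) = a by ring]
    rw [hb] at hq
    push_cast
    field_simp
    linear_combination (4:ℂ) * hq
  rcases lt_trichotomy (Complex.normSq a₁) (ε^2/4) with hlt | heq | hgt
  · have hgt2 : ε^2/4 < Complex.normSq a₂ := by nlinarith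
    refine ⟨(x:ℂ) + a₂, ⟨?_, ?_⟩, husol a₂ ha₂0 hq2⟩
    · simpa using him2pos
    · rw [show ((x:ℂ) + a₂) - (x:ℂ) = a₂ by ring]
      exact abs_gt_of_normSq_gt' hε hgt2
  · exfalso
    have heq2 : Complex.normSq a₂ = ε^2/4 := by
      rw [heq] at hnsprod
      have h4 : (0:ℝ) < ε^2/4 := by positivity
      field_simp at hnsprod
      nlinarith
    have hconj : a₂ = -(starRingEnd ℂ) a₁ := by
      have hmc : a₁ * (starRingEnd ℂ) a₁ = (((ε^2/4:ℝ)):ℂ) := by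
        rw [Complex.mul_conj, heq]
      have h5 : a₁ * a₂ = a₁ * (-(starRingEnd ℂ) a₁) := by
        rw [hprod, mul_neg, hmc]
      exact mul_left_cancel₀ ha₁0 h5
    have hbeq : b = ((2*a₁.im : ℝ):ℂ) * Complex.I := by
      rw [← hsum, hconj]
      have h6 := Complex.sub_conj a₁
      push_cast at h6 ⊢
      linear_combination h6
    apply hseg
    refine ⟨2*a₁.im, by linarith, ?_, ?_⟩
    · have habs1 : ‖a₁‖ = ε/2 := by
        have h7 : (‖a₁‖)^2 = (ε/2)^2 := by rw [Complex.sq_norm, heq]; ring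
        nlinarith [norm_nonneg a₁]
      have h8 := Complex.abs_im_le_norm a₁
      rw [habs1] at h8
      have h9 : a₁.im ≤ ε/2 := le_trans (le_abs_self _) h8
      linarith
    · rw [hb] at hbeq
      push_cast at hbeq ⊢
      linear_combination hbeq
  · refine ⟨(x:ℂ) + a₁, ⟨?_, ?_⟩, husol a₁ ha₁0 hq1⟩
    · simpa using him1pos
    · rw [show ((x:ℂ) + a₁) - (x:ℂ) = a₁ by ring]
      exact abs_gt_of_normSq_gt' hε hgt

lemma parti'' (x ε : ℝ) (hε : 0 < ε) (g : ℂ → ℂ)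
    (hg : ∀ z : ℂ, g z = z + (ε : ℂ) ^ 2 / (4 * ((x : ℂ) - z))) (φ : ℝ) :
    g ((x : ℂ) + ((ε : ℂ) / 2) * Complex.exp ((φ : ℂ) * Complex.I))
      = (x : ℂ) + Complex.I * (ε : ℂ) * (Real.sin φ : ℂ) := by
  rw [hg]
  have hc : Complex.exp ((φ:ℂ)*Complex.I) ≠ 0 := Complex.exp_ne_zero _
  have hε' : (ε:ℂ) ≠ 0 := by exact_mod_cast hε.ne'
  have he : Complex.exp (-((φ:ℂ)*Complex.I)) * Complex.exp ((φ:ℂ)*Complex.I) = 1 := by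
    rw [← Complex.exp_add]; simp
  have hI : Complex.I^2 = -1 := Complex.I_sq
  have hs : ((Real.sin φ : ℝ):ℂ) = (Complex.exp (-((φ:ℂ)*Complex.I)) - Complex.exp ((φ:ℂ)*Complex.I)) * Complex.I / 2 := by
    rw [Complex.ofReal_sin, Complex.sin]; ring_nf
  rw [hs]
  field_simp
  linear_combination (-4*(ε:ℂ)^2) * he + (-4*(ε:ℂ)^2*(Complex.exp ((φ:ℂ)*Complex.I))^2 + 4*(ε:ℂ)^2*Complex.exp (-((φ:ℂ)*Complex.I))*Complex.exp ((φ:ℂ)*Complex.I)) * hI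

lemma partimg' (x ε : ℝ) (hε : 0 < ε) (g : ℂ → ℂ)
    (hg : ∀ z : ℂ, g z = z + (ε : ℂ) ^ 2 / (4 * ((x : ℂ) - z))) :
    g '' {z : ℂ | ∃ φ ∈ Set.Icc (0 : ℝ) π,
        z = (x : ℂ) + ((ε : ℂ) / 2) * Complex.exp ((φ : ℂ) * Complex.I)}
      = {z : ℂ | ∃ t ∈ Set.Icc (0 : ℝ) ε, z = (x : ℂ) + (t : ℂ) * Complex.I} := by
  ext u
  constructor
  · rintro ⟨z, ⟨φ, ⟨hφ0, hφπ⟩, rfl⟩, rfl⟩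
    rw [parti'' x ε hε g hg φ]
    refine ⟨ε * Real.sin φ, ⟨?_, ?_⟩, ?_⟩
    · have := Real.sin_nonneg_of_nonneg_of_le_pi hφ0 hφπ
      positivity
    · have := Real.sin_le_one φ
      nlinarith
    · push_cast; ring
  · rintro ⟨t, ⟨ht0, htε⟩, rfl⟩
    set φ := Real.arcsin (t/ε) with hφ
    have htε1 : t/ε ≤ 1 := by rw [div_le_one hε]; exact htε
    have ht01 : 0 ≤ t/ε := by positivity
    have hsin : Real.sin φ = t/ε := Real.sin_arcsin (by linarith) htε1
    refine ⟨(x : ℂ) + ((ε : ℂ) / 2) * Complex.exp ((φ : ℂ) * Complex.I),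
      ⟨φ, ⟨Real.arcsin_nonneg.mpr ht01, le_trans (Real.arcsin_le_pi_div_two _) (by linarith [Real.pi_pos])⟩, rfl⟩, ?_⟩
    rw [parti'' x ε hε g hg φ, hsin]
    have : (ε:ℂ) ≠ 0 := by exact_mod_cast hε.ne'
    push_cast
    field_simp

/-- Properties of the boundary map `g_{x,ε}(z) = z + ε²/(4(x - z))`:
(i) it maps the semicircle of radius `ε/2` around `x` onto the vertical segment from
`x` to `x + iε`, pointwise via `g(x + (ε/2)e^{iφ}) = x + iε sin φ`;
(ii) it maps `ℝ ∖ {x}` into `ℝ`;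
(iii) restricted to `U = {z ∈ ℍ : |z - x| > ε/2}` it is a holomorphic bijection onto
`ℍ ∖ {x + it : 0 < t ≤ ε}`. -/
theorem stmt11 (x ε : ℝ) (hε : 0 < ε)
    (g : ℂ → ℂ) (hg : ∀ z : ℂ, g z = z + (ε : ℂ) ^ 2 / (4 * ((x : ℂ) - z))) :
    (∀ φ : ℝ, φ ∈ Set.Icc 0 π →
      g ((x : ℂ) + ((ε : ℂ) / 2) * Complex.exp ((φ : ℂ) * Complex.I))
        = (x : ℂ) + Complex.I * (ε : ℂ) * (Real.sin φ : ℂ)) ∧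
    g '' {z : ℂ | ∃ φ ∈ Set.Icc (0 : ℝ) π,
        z = (x : ℂ) + ((ε : ℂ) / 2) * Complex.exp ((φ : ℂ) * Complex.I)}
      = {z : ℂ | ∃ t ∈ Set.Icc (0 : ℝ) ε, z = (x : ℂ) + (t : ℂ) * Complex.I} ∧
    (∀ t : ℝ, t ≠ x → (g (t : ℂ)).im = 0) ∧
    (∀ z ∈ {z : ℂ | 0 < z.im ∧ ε / 2 < ‖z - (x : ℂ)‖},
      DifferentiableAt ℂ g z) ∧
    Set.BijOn g {z : ℂ | 0 < z.im ∧ ε / 2 < ‖z - (x : ℂ)‖}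
      ({z : ℂ | 0 < z.im} \
        {z : ℂ | ∃ t : ℝ, 0 < t ∧ t ≤ ε ∧ z = (x : ℂ) + (t : ℂ) * Complex.I}) := by
  refine ⟨fun φ _ => parti'' x ε hε g hg φ, partimg' x ε hε g hg, ?_, ?_, ?_⟩
  · intro t ht
    rw [hg]
    have h1 : ((t:ℂ)) + (ε : ℂ) ^ 2 / (4 * ((x : ℂ) - (t:ℂ))) = ((t + ε^2/(4*(x-t)) : ℝ) : ℂ) := by
      push_cast
      ring
    rw [h1, Complex.ofReal_im]
  · rintro z ⟨_, habs⟩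
    have hz : z - (x:ℂ) ≠ 0 := by
      intro h
      rw [h] at habs
      simp at habs
      linarith
    have hden : 4 * ((x:ℂ) - z) ≠ 0 := by
      intro h
      apply hz
      have h4 : ((x:ℂ) - z) = 0 := by
        rcases mul_eq_zero.mp h with h' | h'
        · norm_num at h'
        · exact h'
      rw [← neg_sub]; simp [h4]
    have hd : DifferentiableAt ℂ (fun z : ℂ => z + (ε : ℂ) ^ 2 / (4 * ((x : ℂ) - z))) z := by
      apply DifferentiableAt.add differentiableAt_id
      apply DifferentiableAt.div (differentiableAt_const _)
      · exact DifferentiableAt.mul (differentiableAt_const _)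
          ((differentiableAt_const _).sub differentiableAt_id)
      · exact hden
    exact hd.congr_of_eventuallyEq (Filter.Eventually.of_forall fun w => hg w)
  · exact ⟨gmaps' x ε hε g hg, ginj' x ε hε g hg, gsurj' x ε hε g hg⟩
end

section
/- Let R be a commutative ring, ι a type with decidable equality, and F, G : Finset ι → R. Define C : Finset ι → R by strong induction on cardinality via C(S) = F(S) − Σ_{A ⊆ S, A ≠ ∅} G(A)·C(S ∖ A). Then for every finite set S, C(S) = Σ_{n=0}^{|S|} (−1)ⁿ Σ_{(J₁,…,Jₙ)} F(S ∖ (J₁ ∪ ⋯ ∪ Jₙ)) · G(J₁) ⋯ G(Jₙ), where the inner sum runs over all ordered n-tuples (J₁, …, Jₙ) of pairwise disjoint nonempty subsets of S, and the n = 0 term is F(S). (This is the explicit solution of the defining recursion for connected correlation functions ⟨T_{J} 𝒪⟩_c in terms of full correlators ⟨T_{J} 𝒪⟩ = F(J) and ⟨T_{J}⟩ = G(J).) -/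
open Finset

section Aux

variable {R : Type*} [CommRing R] {ι : Type*} [DecidableEq ι]

def TT (F G : Finset ι → R) (S : Finset ι) (n : ℕ) : R :=
  ∑ J ∈ (Fintype.piFinset fun _ : Fin n => S.powerset).filter
      (fun J => (∀ i, J i ≠ ∅) ∧ ∀ i j, i ≠ j → Disjoint (J i) (J j)),
    F (S \ Finset.univ.biUnion J) * ∏ i, G (J i)

lemma TT_zero (F G : Finset ι → R) (S : Finset ι) : TT F G S 0 = F S := by
  simp [TT]

lemma TT_vanish (F G : Finset ι → R) (S : Finset ι) {n : ℕ} (h : S.card < n) :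
    TT F G S n = 0 := by
  rw [TT, Finset.sum_eq_zero]
  intro J hJ
  simp only [mem_filter, Fintype.mem_piFinset, mem_powerset] at hJ
  obtain ⟨hsub, hne, hdisj⟩ := hJ
  exfalso
  have hcard : (Finset.univ.biUnion J).card = ∑ i, (J i).card :=
    Finset.card_biUnion (fun i _ j _ hij => hdisj i j hij)
  have h1 : n ≤ ∑ i : Fin n, (J i).card := by
    calc n = ∑ _i : Fin n, 1 := by simp
    _ ≤ ∑ i, (J i).card := Finset.sum_le_sum fun i _ =>
        Finset.card_pos.mpr (Finset.nonempty_iff_ne_empty.mpr (hne i))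
  have h2 : (Finset.univ.biUnion J).card ≤ S.card :=
    Finset.card_le_card (Finset.biUnion_subset.mpr fun i _ => hsub i)
  omega

lemma TT_succ (F G : Finset ι → R) (S : Finset ι) (n : ℕ) :
    TT F G S (n + 1) = ∑ A ∈ S.powerset.filter (· ≠ ∅), G A * TT F G (S \ A) n := by
  simp only [TT, Finset.mul_sum]
  rw [Finset.sum_sigma']
  refine Finset.sum_nbij' (fun J => ⟨J 0, fun k => J k.succ⟩)
    (fun p => Fin.cons p.1 p.2) ?_ ?_ ?_ ?_ ?_
  · intro J hJ
    simp only [mem_filter, Fintype.mem_piFinset, mem_powerset] at hJ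
    obtain ⟨hsub, hne, hdisj⟩ := hJ
    simp only [Finset.mem_sigma, mem_filter, Fintype.mem_piFinset, mem_powerset]
    refine ⟨⟨hsub 0, hne 0⟩, fun k => ?_, fun k => hne k.succ, fun i j hij =>
      hdisj i.succ j.succ (by simpa using hij)⟩
    · exact Finset.subset_sdiff.mpr ⟨hsub k.succ, hdisj k.succ 0 (Fin.succ_ne_zero k)⟩
  · intro p hp
    simp only [Finset.mem_sigma, mem_filter, Fintype.mem_piFinset, mem_powerset] at hp
    obtain ⟨⟨hA, hAne⟩, hsub, hne, hdisj⟩ := hp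
    simp only [mem_filter, Fintype.mem_piFinset, mem_powerset]
    refine ⟨fun i => ?_, fun i => ?_, fun i j hij => ?_⟩
    · refine Fin.cases ?_ ?_ i
      · simpa using hA
      · intro k; simpa using (hsub k).trans (Finset.sdiff_subset)
    · refine Fin.cases ?_ ?_ i
      · simpa using hAne
      · intro k; simpa using hne k
    · have hd0 : ∀ k : Fin n, Disjoint (p.2 k) p.1 :=
        fun k => Finset.sdiff_disjoint.mono_left (hsub k)
      rcases Fin.eq_zero_or_eq_succ i with rfl | ⟨a, rfl⟩ <;>
        rcases Fin.eq_zero_or_eq_succ j with rfl | ⟨b, rfl⟩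
      · exact absurd rfl hij
      · simpa using (hd0 b).symm
      · simpa using hd0 a
      · simp only [Fin.cons_succ]
        exact hdisj a b (fun h => hij (by rw [h]))
  · intro J hJ
    exact Fin.cons_self_tail J
  · intro p hp
    simp [Fin.cons_zero, Fin.cons_succ]
  · intro J hJ
    simp only [mem_filter, Fintype.mem_piFinset, mem_powerset] at hJ
    obtain ⟨hsub, hne, hdisj⟩ := hJ
    rw [Fin.prod_univ_succ]
    have hset : S \ Finset.univ.biUnion J
        = (S \ J 0) \ Finset.univ.biUnion (fun k : Fin n => J k.succ) := by
      ext a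
      simp only [Finset.mem_sdiff, Finset.mem_biUnion, Finset.mem_univ, true_and, not_exists,
        Fin.forall_fin_succ]
      tauto
    rw [hset]; ring

end Aux

/-- Explicit solution of the defining recursion for connected correlation functions:
if `C(S) = F(S) - Σ_{∅ ≠ A ⊆ S} G(A)·C(S∖A)`, then
`C(S) = Σ_{n=0}^{|S|} (-1)ⁿ Σ_{(J₁,…,Jₙ)} F(S ∖ ⋃ᵢ Jᵢ)·G(J₁)⋯G(Jₙ)`, the inner sum
running over ordered `n`-tuples of pairwise disjoint nonempty subsets of `S`. -/
theorem stmt14 {R : Type*} [CommRing R] {ι : Type*} [DecidableEq ι]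
    (F G : Finset ι → R) (C : Finset ι → R)
    (hC : ∀ S : Finset ι,
      C S = F S - ∑ A ∈ S.powerset.filter (· ≠ ∅), G A * C (S \ A)) :
    ∀ S : Finset ι,
      C S = ∑ n ∈ Finset.range (S.card + 1), (-1 : R) ^ n *
        ∑ J ∈ (Fintype.piFinset fun _ : Fin n => S.powerset).filter
            (fun J => (∀ i, J i ≠ ∅) ∧ ∀ i j, i ≠ j → Disjoint (J i) (J j)),
          F (S \ Finset.univ.biUnion J) * ∏ i, G (J i) := by
  intro S
  induction S using Finset.strongInduction with
  | _ S ih =>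
  show C S = ∑ n ∈ Finset.range (S.card + 1), (-1 : R) ^ n * TT F G S n
  rw [hC S]
  have key : ∀ A ∈ S.powerset.filter (· ≠ ∅),
      G A * C (S \ A) = ∑ m ∈ Finset.range S.card, G A * ((-1 : R) ^ m * TT F G (S \ A) m) := by
    intro A hA
    simp only [mem_filter, mem_powerset] at hA
    have hss : S \ A ⊂ S := Finset.sdiff_ssubset hA.1 (Finset.nonempty_iff_ne_empty.mpr hA.2)
    have hlt : (S \ A).card < S.card := Finset.card_lt_card hss
    rw [ih (S \ A) hss]
    show G A * (∑ m ∈ Finset.range ((S \ A).card + 1), (-1 : R) ^ m * TT F G (S \ A) m) = _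
    rw [Finset.mul_sum]
    refine Finset.sum_subset (Finset.range_subset_range.mpr hlt) ?_
    intro x hx hnx
    simp only [Finset.mem_range] at hx hnx
    rw [TT_vanish F G (S \ A) (by omega), mul_zero, mul_zero]
  rw [Finset.sum_congr rfl key, Finset.sum_comm]
  rw [Finset.sum_range_succ']
  have step : ∀ m, ∑ A ∈ S.powerset.filter (· ≠ ∅), G A * ((-1 : R) ^ m * TT F G (S \ A) m)
      = -((-1 : R) ^ (m + 1) * TT F G S (m + 1)) := by
    intro m
    rw [TT_succ, Finset.mul_sum, pow_succ]
    rw [← Finset.sum_neg_distrib]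
    refine Finset.sum_congr rfl fun A _ => by ring
  rw [Finset.sum_congr rfl fun m _ => step m]
  simp [TT_zero, sub_eq_add_neg, Finset.sum_neg_distrib, add_comm]
end

section
/- Fix h, c ∈ ℂ, and for k ≥ 0 let Ω_k = {x ∈ ℝ^k : the coordinates xᵢ are pairwise distinct and nonzero}. Suppose given families of smooth symmetric functions F_k : Ω_k → ℂ and G_k : Ω_k → ℂ (k ≥ 0) with G₀ = 1 and G₁ = 0, satisfying for every k ≥ 0 and (x₁,…,x_k, y) ∈ Ω_{k+1} the Ward identities: F_{k+1}(x₁,…,x_k,y) = Σ_{i=1}^{k} [ (1/(y−xᵢ) − 1/y)·∂F_k/∂xᵢ(x) + (2/(y−xᵢ)²)·F_k(x) ] + (h/y²)·F_k(x) + Σ_{j=1}^{k} (c/2)·(y−xⱼ)^{−4}·F_{k−1}(x₁,…,x̂ⱼ,…,x_k), and the same identity with G in place of F everywhere but with the term (h/y²)·G_k(x) omitted (x̂ⱼ means xⱼ is removed). Define connected functions F^c_k : Ω_k → ℂ recursively by F^c₀ = F₀ and F^c_k(x) = F_k(x) − Σ_{A ⊆ {1,…,k}, A ≠ ∅} G_{|A|}(x_A)·F^c_{k−|A|}(x_{Aᶜ}),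 where x_A denotes the coordinates indexed by A. Then for every k ≥ 0 and (x, y) ∈ Ω_{k+1}: F^c_{k+1}(x₁,…,x_k,y) = Σ_{i=1}^{k} [ (1/(y−xᵢ) − 1/y)·∂F^c_k/∂xᵢ(x) + (2/(y−xᵢ)²)·F^c_k(x) ] + (h/y²)·F^c_k(x). (That is, connected correlators satisfy the conformal Ward identities without any anomalous contact terms.) -/
open Finset Complex

/-- Partial derivative `∂f/∂xᵢ` of a function of `k` real variables. -/
noncomputable def pderivC {k : ℕ} (i : Fin k) (f : (Fin k → ℝ) → ℂ) (x : Fin k → ℝ) : ℂ :=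
  deriv (fun t => f (Function.update x i t)) (x i)

/-- The configuration space `Ω_k` of pairwise distinct nonzero real coordinates. -/
def OmegaSet (k : ℕ) : Set (Fin k → ℝ) :=
  {x | (∀ i, x i ≠ 0) ∧ Function.Injective x}

namespace CFT15

/-- restriction of a vector to a finset of coordinates -/
def res {n : ℕ} (x : Fin n → ℝ) (s : Finset (Fin n)) : Fin s.card → ℝ :=
  fun i => x (s.orderEmbOfFin rfl i)

/-- application of a graded family to a restricted vector -/
def fapp (f : (k : ℕ) → (Fin k → ℝ) → ℂ) {n : ℕ} (s : Finset (Fin n)) (x : Fin n → ℝ) : ℂ :=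
  f s.card (res x s)

lemma fcongr {α : Sort*} (f : (k : ℕ) → (Fin k → ℝ) → α) {a b : ℕ} (e : a = b)
    {g : Fin a → ℝ} {g' : Fin b → ℝ} (hg : ∀ i : Fin b, g (Fin.cast e.symm i) = g' i) :
    f a g = f b g' := by
  subst e; exact congrArg (f a) (funext hg)

lemma oe_univ {n : ℕ} (h : (univ : Finset (Fin n)).card = n) (i : Fin n) :
    (univ : Finset (Fin n)).orderEmbOfFin h i = i :=
  (congrFun (orderEmbOfFin_unique h (f := fun j => j) (fun j => mem_univ j) strictMono_id) i).symm

lemma oe_map {a b : ℕ} (e : Fin a ↪o Fin b) (s : Finset (Fin a)) {k : ℕ} (h : s.card = k)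
    (h2 : (s.map e.toEmbedding).card = k) (i : Fin k) :
    (s.map e.toEmbedding).orderEmbOfFin h2 i = e (s.orderEmbOfFin h i) :=
  (congrFun (orderEmbOfFin_unique h2 (f := fun j => e (s.orderEmbOfFin h j))
    (fun j => mem_map_of_mem _ (orderEmbOfFin_mem s h j))
    (e.strictMono.comp (s.orderEmbOfFin h).strictMono)) i).symm

lemma oe_cast {n k l : ℕ} (s : Finset (Fin n)) {h : s.card = k} {h' : s.card = l}
    (i : Fin k) (j : Fin l) (hij : (i : ℕ) = (j : ℕ)) :
    s.orderEmbOfFin h i = s.orderEmbOfFin h' j := by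
  rw [orderEmbOfFin_eq_orderEmbOfFin_iff]; exact hij

/-- the increasing enumeration of `insert (last n) (C.map castSuccEmb)` is the `snoc`. -/
lemma snoc_strictMono {n : ℕ} (C : Finset (Fin n)) :
    StrictMono (Fin.snoc (fun j => Fin.castSucc (C.orderEmbOfFin rfl j)) (Fin.last n) :
      Fin (C.card + 1) → Fin (n+1)) := by
  intro a b hab
  rcases Fin.eq_castSucc_or_eq_last b with ⟨b0, rfl⟩ | rfl
  · rcases Fin.eq_castSucc_or_eq_last a with ⟨a0, rfl⟩ | rfl
    · rw [Fin.snoc_castSucc, Fin.snoc_castSucc]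
      exact Fin.castSucc_lt_castSucc_iff.2 ((C.orderEmbOfFin rfl).strictMono
        (Fin.castSucc_lt_castSucc_iff.1 hab))
    · exact absurd hab (not_lt.2 (Fin.le_last _))
  · rcases Fin.eq_castSucc_or_eq_last a with ⟨a0, rfl⟩ | rfl
    · rw [Fin.snoc_castSucc, Fin.snoc_last]
      exact Fin.castSucc_lt_last _
    · exact absurd hab (lt_irrefl _)


lemma castSuccEmb_eq : (Fin.castSuccOrderEmb : Fin n ↪o Fin (n+1)).toEmbedding = Fin.castSuccEmb := by
  ext a; rfl

lemma last_not_mem_map {n : ℕ} (C : Finset (Fin n)) :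
    Fin.last n ∉ C.map Fin.castSuccEmb := by
  simp only [mem_map, not_exists]
  rintro a ⟨-, ha⟩
  exact absurd (ha ▸ Fin.castSucc_lt_last a) (lt_irrefl _)

lemma card_insert_last {n : ℕ} (C : Finset (Fin n)) :
    (insert (Fin.last n) (C.map Fin.castSuccEmb)).card = C.card + 1 := by
  rw [card_insert_of_notMem (last_not_mem_map C), card_map]

lemma oe_insert_last {n : ℕ} (C : Finset (Fin n))
    (h2 : (insert (Fin.last n) (C.map Fin.castSuccEmb)).card = C.card + 1)
    (i : Fin (C.card + 1)) :
    (insert (Fin.last n) (C.map Fin.castSuccEmb)).orderEmbOfFin h2 i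
      = (Fin.snoc (fun j => Fin.castSucc (C.orderEmbOfFin rfl j)) (Fin.last n) :
          Fin (C.card + 1) → Fin (n+1)) i := by
  refine (congrFun (orderEmbOfFin_unique h2
    (f := (Fin.snoc (fun j => Fin.castSucc (C.orderEmbOfFin rfl j)) (Fin.last n) :
      Fin (C.card + 1) → Fin (n+1))) ?_ (snoc_strictMono C)) i).symm
  intro j
  rcases Fin.eq_castSucc_or_eq_last j with ⟨j0, rfl⟩ | rfl
  · rw [Fin.snoc_castSucc]
    refine mem_insert_of_mem (mem_map_of_mem _ (orderEmbOfFin_mem C rfl j0))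
  · rw [Fin.snoc_last]; exact mem_insert_self _ _

lemma oe_compl_singleton {n : ℕ} (j : Fin (n+1))
    (h2 : ({j}ᶜ : Finset (Fin (n+1))).card = n) (i : Fin n) :
    ({j}ᶜ : Finset (Fin (n+1))).orderEmbOfFin h2 i = j.succAbove i :=
  (congrFun (orderEmbOfFin_unique h2 (f := fun i => j.succAbove i)
    (fun i => by simp [Finset.mem_compl, Fin.succAbove_ne j i])
    (Fin.strictMono_succAbove j)) i).symm

lemma card_compl_singleton {n : ℕ} (j : Fin (n+1)) :
    ({j}ᶜ : Finset (Fin (n+1))).card = n := by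
  rw [card_compl, card_singleton, Fintype.card_fin]; omega

lemma compl_map_castSucc {n : ℕ} (B : Finset (Fin n)) :
    (B.map Fin.castSuccEmb)ᶜ = insert (Fin.last n) (Bᶜ.map Fin.castSuccEmb) := by
  ext a
  rcases Fin.eq_castSucc_or_eq_last a with ⟨a0, rfl⟩ | rfl
  · rw [mem_compl, mem_insert]
    constructor
    · intro ha
      exact Or.inr (mem_map_of_mem _ (mem_compl.2 fun hB => ha (mem_map_of_mem _ hB)))
    · rintro (hl | hm)
      · exact absurd hl (Fin.castSucc_lt_last a0).ne
      · rcases mem_map.1 hm with ⟨b, hb, hba⟩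
        have hb0 : b = a0 := Fin.castSucc_injective _ hba
        subst hb0
        intro hmm
        rcases mem_map.1 hmm with ⟨d, hd, hda⟩
        have hd0 : d = b := Fin.castSucc_injective _ hda
        subst hd0
        exact mem_compl.1 hb hd
  · rw [mem_compl, mem_insert]
    constructor
    · intro _; exact Or.inl rfl
    · intro _; exact last_not_mem_map B

lemma compl_insert_last {n : ℕ} (B : Finset (Fin n)) :
    (insert (Fin.last n) (B.map Fin.castSuccEmb))ᶜ = Bᶜ.map Fin.castSuccEmb := by
  rw [compl_insert, compl_map_castSucc, erase_insert]
  exact last_not_mem_map Bᶜ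

lemma map_univ_oe {n : ℕ} (s : Finset (Fin n)) :
    (univ : Finset (Fin s.card)).map (s.orderEmbOfFin rfl).toEmbedding = s := by
  ext a
  rw [mem_map]
  constructor
  · rintro ⟨i, -, rfl⟩; exact orderEmbOfFin_mem s rfl i
  · intro ha
    have h2 : a ∈ Set.range (s.orderEmbOfFin rfl) := by
      rw [range_orderEmbOfFin]; exact ha
    rcases h2 with ⟨i, hi⟩
    exact ⟨i, mem_univ i, hi⟩

lemma sdiff_map_oe {n : ℕ} (s : Finset (Fin n)) (A : Finset (Fin s.card)) :
    s \ A.map (s.orderEmbOfFin rfl).toEmbedding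
      = (Aᶜ).map (s.orderEmbOfFin rfl).toEmbedding := by
  ext a
  simp only [mem_sdiff, mem_map]
  constructor
  · rintro ⟨has, hn⟩
    have h2 : a ∈ Set.range (s.orderEmbOfFin rfl) := by
      rw [range_orderEmbOfFin]; exact has
    rcases h2 with ⟨i, hi⟩
    refine ⟨i, mem_compl.2 fun hiA => hn ⟨i, hiA, hi⟩, hi⟩
  · rintro ⟨i, hiA, rfl⟩
    refine ⟨orderEmbOfFin_mem s rfl i, ?_⟩
    rintro ⟨d, hd, hda⟩
    have hdi : d = i := (s.orderEmbOfFin rfl).injective hda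
    subst hdi
    exact mem_compl.1 hiA hd

lemma res_apply {n k : ℕ} (s : Finset (Fin n)) (x : Fin n → ℝ) (h : s.card = k) (i : Fin k) :
    res x s (Fin.cast h.symm i) = x (s.orderEmbOfFin h i) := by
  show x _ = _
  exact congrArg x (oe_cast s _ i rfl)

/-- transporting `fapp` along a mapped finset -/
lemma fapp_map (f : (k : ℕ) → (Fin k → ℝ) → ℂ) {a b : ℕ} (e : Fin a ↪o Fin b)
    (s : Finset (Fin a)) (x : Fin b → ℝ) :
    fapp f (s.map e.toEmbedding) x = fapp f s (x ∘ e) := by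
  refine fcongr f (card_map _) (fun i => ?_)
  rw [res_apply _ x (card_map _) i, oe_map e s rfl (card_map _)]
  rfl

lemma fapp_univ (f : (k : ℕ) → (Fin k → ℝ) → ℂ) {n : ℕ} (x : Fin n → ℝ) :
    fapp f (univ : Finset (Fin n)) x = f n x := by
  refine fcongr f (Finset.card_fin n) (fun i => ?_)
  rw [res_apply _ x (Finset.card_fin n) i, oe_univ]

lemma fapp_insert_last (f : (k : ℕ) → (Fin k → ℝ) → ℂ) {n : ℕ} (C : Finset (Fin n))
    (x : Fin n → ℝ) (y : ℝ) :
    fapp f (insert (Fin.last n) (C.map Fin.castSuccEmb)) (Fin.snoc x y)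
      = f (C.card + 1) (Fin.snoc (res x C) y) := by
  refine fcongr f (card_insert_last C) (fun i => ?_)
  rw [res_apply _ _ (card_insert_last C) i, oe_insert_last C (card_insert_last C) i]
  rcases Fin.eq_castSucc_or_eq_last i with ⟨i0, rfl⟩ | rfl
  · rw [Fin.snoc_castSucc, Fin.snoc_castSucc, Fin.snoc_castSucc]
    rfl
  · rw [Fin.snoc_last, Fin.snoc_last, Fin.snoc_last]

lemma fapp_compl_singleton (f : (k : ℕ) → (Fin k → ℝ) → ℂ) {m : ℕ} (j : Fin (m+1))
    (x : Fin (m+1) → ℝ) :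
    fapp f ({j}ᶜ : Finset (Fin (m+1))) x = f m (x ∘ j.succAbove) := by
  refine fcongr f (card_compl_singleton j) (fun i => ?_)
  rw [res_apply _ x (card_compl_singleton j) i, oe_compl_singleton j (card_compl_singleton j) i]
  rfl

/-! ### summation lemmas -/

lemma sum_pe {n : ℕ} (t : Finset (Fin n) → ℂ) :
    ∑ A ∈ (univ : Finset (Fin n)).powerset, t A
      = t ∅ + ∑ A ∈ (univ : Finset (Fin n)).powerset.filter (· ≠ ∅), t A := by
  rw [← Finset.sum_filter_add_sum_filter_not ((univ : Finset (Fin n)).powerset) (· ≠ ∅) t]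
  rw [add_comm]
  congr 1
  have : (univ : Finset (Fin n)).powerset.filter (fun A => ¬ A ≠ ∅) = {∅} := by
    ext A
    simp only [mem_filter, mem_powerset, mem_singleton, not_not]
    exact ⟨fun h => h.2, fun h => ⟨h ▸ empty_subset _, h⟩⟩
  rw [this, sum_singleton]

lemma sum_powerset_map {α β : Type*} [DecidableEq α] [DecidableEq β] (e : α ↪ β)
    (s : Finset α) (t : Finset β → ℂ) :
    ∑ A ∈ (s.map e).powerset, t A = ∑ B ∈ s.powerset, t (B.map e) := by
  refine (Finset.sum_nbij' (fun B => B.map e) (fun A => s.filter (fun a => e a ∈ A))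
    ?_ ?_ ?_ ?_ ?_).symm
  · intro B hB
    exact mem_powerset.2 (map_subset_map.2 (mem_powerset.1 hB))
  · intro A _
    exact mem_powerset.2 (filter_subset _ _)
  · intro B hB
    ext a
    simp only [mem_filter, mem_map]
    constructor
    · rintro ⟨-, d, hd, hde⟩
      exact (e.injective hde) ▸ hd
    · intro ha
      exact ⟨mem_powerset.1 hB ha, a, ha, rfl⟩
  · intro A hA
    ext b
    simp only [mem_map, mem_filter]
    constructor
    · rintro ⟨a, ⟨-, ha⟩, rfl⟩; exact ha
    · intro hb
      rcases mem_map.1 (mem_powerset.1 hA hb) with ⟨a, ha, rfl⟩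
      exact ⟨a, ⟨ha, hb⟩, rfl⟩
  · intro B _
    rfl

/-- reindexing a sum over subsets of `s` by subsets of `Fin s.card` -/
lemma sum_powerset_reindex {n : ℕ} (s : Finset (Fin n)) (t : Finset (Fin n) → ℂ) :
    ∑ A ∈ s.powerset, t A
      = ∑ A ∈ (univ : Finset (Fin s.card)).powerset,
          t (A.map (s.orderEmbOfFin rfl).toEmbedding) := by
  conv_lhs => rw [← map_univ_oe s]
  rw [sum_powerset_map]

/-- splitting a sum over nonempty subsets of `Fin (n+1)` according to membership of `last`. -/
lemma sum_filter_split {n : ℕ} (t : Finset (Fin (n+1)) → ℂ) :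
    ∑ A ∈ (univ : Finset (Fin (n+1))).powerset.filter (· ≠ ∅), t A
      = (∑ B ∈ (univ : Finset (Fin n)).powerset.filter (· ≠ ∅), t (B.map Fin.castSuccEmb))
        + ∑ B ∈ (univ : Finset (Fin n)).powerset,
            t (insert (Fin.last n) (B.map Fin.castSuccEmb)) := by
  have h1 : ∑ A ∈ (univ : Finset (Fin (n+1))).powerset, t A
      = (∑ B ∈ (univ : Finset (Fin n)).powerset, t (B.map Fin.castSuccEmb))
        + ∑ B ∈ (univ : Finset (Fin n)).powerset,
            t (insert (Fin.last n) (B.map Fin.castSuccEmb)) := by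
    rw [Fin.univ_castSuccEmb, Finset.cons_eq_insert,
      Finset.sum_powerset_insert (by simpa using last_not_mem_map (univ : Finset (Fin n)))]
    rw [sum_powerset_map, sum_powerset_map]
  have h2 := sum_pe t
  have h3 := sum_pe (fun B => t (B.map Fin.castSuccEmb))
  rw [h2] at h1
  rw [h3, map_empty] at h1
  have := h1
  linear_combination this

lemma sum_over_set {n : ℕ} (s : Finset (Fin n)) (g : Fin n → ℂ) :
    ∑ i ∈ s, g i = ∑ i' : Fin s.card, g (s.orderEmbOfFin rfl i') := by
  conv_lhs => rw [← map_univ_oe s]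
  rw [Finset.sum_map]
  rfl

/-! ### topology -/

lemma omega_isOpen (k : ℕ) : IsOpen (OmegaSet k) := by
  have : OmegaSet k = (⋂ i : Fin k, {x : Fin k → ℝ | x i ≠ 0}) ∩
      ⋂ i : Fin k, ⋂ j : Fin k, ⋂ _ : i ≠ j, {x : Fin k → ℝ | x i ≠ x j} := by
    ext x
    simp only [OmegaSet, Set.mem_inter_iff, Set.mem_iInter, Set.mem_setOf_eq]
    refine and_congr Iff.rfl ⟨fun h i j hij hx => hij (h hx), fun h a b hab => ?_⟩
    by_contra hne
    exact h a b hne hab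
  rw [this]
  refine IsOpen.inter (isOpen_iInter_of_finite fun i => ?_)
    (isOpen_iInter_of_finite fun i => isOpen_iInter_of_finite fun j =>
      isOpen_iInter_of_finite fun hij => ?_)
  · exact isOpen_compl_singleton.preimage (continuous_apply i)
  · have : {x : Fin k → ℝ | x i ≠ x j}
        = (fun x : Fin k → ℝ => x i - x j) ⁻¹' ({0}ᶜ) := by
      ext x
      simp [sub_eq_zero]
    rw [this]
    exact isOpen_compl_singleton.preimage ((continuous_apply i).sub (continuous_apply j))

lemma omega_comp {N M : ℕ} {X : Fin N → ℝ} (hX : X ∈ OmegaSet N) {g : Fin M → Fin N}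
    (hg : Function.Injective g) : X ∘ g ∈ OmegaSet M :=
  ⟨fun i => hX.1 _, hX.2.comp hg⟩

lemma res_mem {n : ℕ} {x : Fin n → ℝ} (hx : x ∈ OmegaSet n) (s : Finset (Fin n)) :
    res x s ∈ OmegaSet s.card :=
  omega_comp hx (s.orderEmbOfFin rfl).injective

lemma snoc_comp_castSucc {n : ℕ} (x : Fin n → ℝ) (y : ℝ) :
    (Fin.snoc x y : Fin (n+1) → ℝ) ∘ Fin.castSucc = x := by
  funext i
  simp [Fin.snoc_castSucc]

lemma snoc_res_eq {n : ℕ} (C : Finset (Fin n)) (x : Fin n → ℝ) (y : ℝ) :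
    (Fin.snoc (res x C) y : Fin (C.card + 1) → ℝ)
      = (Fin.snoc x y : Fin (n+1) → ℝ) ∘
        (Fin.snoc (fun j => Fin.castSucc (C.orderEmbOfFin rfl j)) (Fin.last n) :
          Fin (C.card + 1) → Fin (n+1)) := by
  funext i
  rcases Fin.eq_castSucc_or_eq_last i with ⟨i0, rfl⟩ | rfl
  · simp only [Function.comp_apply, Fin.snoc_castSucc]
    rfl
  · simp only [Function.comp_apply, Fin.snoc_last]

lemma snoc_res_mem {n : ℕ} {x : Fin n → ℝ} {y : ℝ}
    (hx : Fin.snoc x y ∈ OmegaSet (n+1)) (C : Finset (Fin n)) :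
    Fin.snoc (res x C) y ∈ OmegaSet (C.card + 1) := by
  rw [snoc_res_eq]
  exact omega_comp hx (snoc_strictMono C).injective

lemma x_mem_of_snoc {n : ℕ} {x : Fin n → ℝ} {y : ℝ}
    (hx : Fin.snoc x y ∈ OmegaSet (n+1)) : x ∈ OmegaSet n := by
  rw [← snoc_comp_castSucc x y]
  exact omega_comp hx (Fin.castSucc_injective n)

/-! ### calculus -/

noncomputable def resL {n : ℕ} (s : Finset (Fin n)) : (Fin n → ℝ) →L[ℝ] (Fin s.card → ℝ) :=
  ContinuousLinearMap.pi fun i => ContinuousLinearMap.proj (s.orderEmbOfFin rfl i)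

lemma fapp_eq_comp (f : (k : ℕ) → (Fin k → ℝ) → ℂ) {n : ℕ} (s : Finset (Fin n)) :
    fapp f s = fun z => f s.card (resL s z) := rfl

lemma diffAt_of_contDiffOn {k : ℕ} {f : (Fin k → ℝ) → ℂ} (hf : ContDiffOn ℝ (⊤ : ℕ∞) f (OmegaSet k))
    {z : Fin k → ℝ} (hz : z ∈ OmegaSet k) : DifferentiableAt ℝ f z :=
  ((hf z hz).contDiffAt ((omega_isOpen k).mem_nhds hz)).differentiableAt (by simp)

lemma fapp_diffAt {f : (k : ℕ) → (Fin k → ℝ) → ℂ} {n : ℕ} (s : Finset (Fin n)) {x : Fin n → ℝ}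
    (hdiff : DifferentiableAt ℝ (f s.card) (res x s)) : DifferentiableAt ℝ (fapp f s) x :=
  hdiff.comp x (resL s).differentiableAt

lemma hasDerivAt_pderiv {n : ℕ} {f : (Fin n → ℝ) → ℂ} {x : Fin n → ℝ}
    (hf : DifferentiableAt ℝ f x) (i : Fin n) :
    HasDerivAt (fun t => f (Function.update x i t)) (pderivC i f x) (x i) := by
  have h1 := hasDerivAt_update x i (x i)
  have h2 : DifferentiableAt ℝ f (Function.update x i (x i)) := by
    rwa [Function.update_eq_self]
  exact ((h2.hasFDerivAt.comp_hasDerivAt (x i) h1).differentiableAt).hasDerivAt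

lemma hasDerivAt_fapp {f : (k : ℕ) → (Fin k → ℝ) → ℂ} {n : ℕ} (s : Finset (Fin n))
    {x : Fin n → ℝ} (hdiff : DifferentiableAt ℝ (f s.card) (res x s)) (i : Fin n) :
    HasDerivAt (fun t => fapp f s (Function.update x i t)) (pderivC i (fapp f s) x) (x i) :=
  hasDerivAt_pderiv (fapp_diffAt s hdiff) i

lemma res_update_not_mem {n : ℕ} (s : Finset (Fin n)) (x : Fin n → ℝ) {i : Fin n}
    (hi : i ∉ s) (t : ℝ) : res (Function.update x i t) s = res x s := by
  funext j
  refine Function.update_of_ne (fun he => hi ?_) t x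
  rw [← he]
  exact orderEmbOfFin_mem s rfl j

lemma pderiv_fapp_not_mem {f : (k : ℕ) → (Fin k → ℝ) → ℂ} {n : ℕ} {s : Finset (Fin n)}
    {x : Fin n → ℝ} {i : Fin n} (hi : i ∉ s) : pderivC i (fapp f s) x = 0 := by
  have hfun : (fun t => fapp f s (Function.update x i t)) = (fun _ => fapp f s x) :=
    funext fun t => congrArg (f s.card) (res_update_not_mem s x hi t)
  show deriv _ (x i) = 0
  rw [hfun, deriv_const]

lemma res_update_mem {n : ℕ} (s : Finset (Fin n)) (x : Fin n → ℝ) (i' : Fin s.card) (t : ℝ) :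
    res (Function.update x (s.orderEmbOfFin rfl i') t) s = Function.update (res x s) i' t := by
  funext j
  rcases eq_or_ne j i' with rfl | hj
  · rw [Function.update_self]
    show Function.update x _ t _ = t
    rw [Function.update_self]
  · rw [Function.update_of_ne hj]
    exact Function.update_of_ne (fun he => hj ((s.orderEmbOfFin rfl).injective he)) t x

lemma pderiv_fapp_mem {f : (k : ℕ) → (Fin k → ℝ) → ℂ} {n : ℕ} (s : Finset (Fin n))
    (x : Fin n → ℝ) (i' : Fin s.card) :
    pderivC (s.orderEmbOfFin rfl i') (fapp f s) x = pderivC i' (f s.card) (res x s) := by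
  have hfun : (fun t => fapp f s (Function.update x (s.orderEmbOfFin rfl i') t))
      = (fun t => f s.card (Function.update (res x s) i' t)) :=
    funext fun t => congrArg (f s.card) (res_update_mem s x i' t)
  show deriv _ _ = deriv _ _
  rw [hfun]
  rfl

/-- reindexing the Ward-identity sums from `Fin s.card` to `Fin n` -/
lemma ward_sum_eq (f : (k : ℕ) → (Fin k → ℝ) → ℂ) {n : ℕ} (s : Finset (Fin n))
    (x : Fin n → ℝ) (φ ψ : ℝ → ℂ) :
    ∑ i' : Fin s.card, (φ (res x s i') * pderivC i' (f s.card) (res x s)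
        + ψ (res x s i') * f s.card (res x s))
      = (∑ i : Fin n, φ (x i) * pderivC i (fapp f s) x)
        + (∑ i ∈ s, ψ (x i)) * fapp f s x := by
  rw [Finset.sum_add_distrib]
  congr 1
  · have hsplit := Finset.sum_add_sum_compl s (fun i => φ (x i) * pderivC i (fapp f s) x)
    have hz : ∑ i ∈ sᶜ, φ (x i) * pderivC i (fapp f s) x = 0 :=
      Finset.sum_eq_zero fun i hi => by
        rw [pderiv_fapp_not_mem (mem_compl.1 hi), mul_zero]
    rw [← hsplit, hz, add_zero, sum_over_set s]
    apply Finset.sum_congr rfl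
    intro i' _
    rw [pderiv_fapp_mem]
    rfl
  · rw [← Finset.sum_mul]
    congr 1
    rw [sum_over_set s]
    rfl

/-- reindexing the contact-term sums -/
lemma contact_sum_eq (f : (k : ℕ) → (Fin k → ℝ) → ℂ) {n : ℕ} (s : Finset (Fin n))
    (x : Fin n → ℝ) (ω : ℝ → ℂ) :
    ∑ j' : Fin s.card, ω (res x s j') * fapp f ({j'}ᶜ : Finset (Fin s.card)) (res x s)
      = ∑ j ∈ s, ω (x j) * fapp f (s.erase j) x := by
  rw [sum_over_set s]
  apply Finset.sum_congr rfl
  intro j' _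
  congr 1
  have h2 : ({j'}ᶜ : Finset (Fin s.card)).map (s.orderEmbOfFin rfl).toEmbedding
      = s.erase (s.orderEmbOfFin rfl j') := by
    rw [← sdiff_map_oe s {j'}, map_singleton, Finset.erase_eq]
    rfl
  rw [← h2, fapp_map f (s.orderEmbOfFin rfl)]
  rfl

lemma compl_eq_sdiff_erase {n : ℕ} {B : Finset (Fin n)} {j : Fin n} (hj : j ∈ B) :
    Bᶜ = ({j}ᶜ : Finset (Fin n)) \ B.erase j := by
  ext a
  simp only [mem_compl, mem_sdiff, mem_singleton, mem_erase]
  constructor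
  · intro ha
    exact ⟨fun he => ha (he ▸ hj), fun hc => ha hc.2⟩
  · rintro ⟨h1, h2⟩ hB
    exact h2 ⟨h1, hB⟩

/-! ### family layer -/

section Family

variable (F G Fc : (k : ℕ) → (Fin k → ℝ) → ℂ)

/-- the recursion, in `fapp` form -/
lemma hFcrec' (hFcrec : ∀ (k : ℕ) (x : Fin k → ℝ),
      Fc k x = F k x - ∑ A ∈ (Finset.univ : Finset (Fin k)).powerset.filter (· ≠ ∅),
        G A.card (fun i => x ((A.orderIsoOfFin rfl i : Fin k)))
          * Fc (k - A.card)
              (fun i => x (((Aᶜ).orderIsoOfFin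
                (by rw [Finset.card_compl, Fintype.card_fin]) i : Fin k)))) :
    ∀ (k : ℕ) (x : Fin k → ℝ),
      Fc k x = F k x - ∑ A ∈ (univ : Finset (Fin k)).powerset.filter (· ≠ ∅),
        fapp G A x * fapp Fc Aᶜ x := by
  intro k x
  rw [hFcrec k x]
  congr 1
  apply sum_congr rfl
  intro A _
  refine congrArg₂ (· * ·) (congrArg (G A.card) (funext fun i => ?_)) ?_
  · rw [coe_orderIsoOfFin_apply]
    rfl
  · refine fcongr Fc (a := k - A.card) (b := Aᶜ.card)
      ((by rw [card_compl, Fintype.card_fin] : (Aᶜ : Finset (Fin k)).card = k - A.card)).symm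
      (fun i => ?_)
    rw [coe_orderIsoOfFin_apply]
    exact congrArg x (oe_cast Aᶜ _ i rfl)

lemma recFull (hG0 : ∀ x, G 0 x = 1)
    (hrec : ∀ (k : ℕ) (x : Fin k → ℝ),
      Fc k x = F k x - ∑ A ∈ (univ : Finset (Fin k)).powerset.filter (· ≠ ∅),
        fapp G A x * fapp Fc Aᶜ x) :
    ∀ (k : ℕ) (x : Fin k → ℝ),
      F k x = ∑ A ∈ (univ : Finset (Fin k)).powerset, fapp G A x * fapp Fc Aᶜ x := by
  intro k x
  rw [sum_pe]
  have h1 : fapp G (∅ : Finset (Fin k)) x = 1 := hG0 _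
  have h2 : fapp Fc ((∅ : Finset (Fin k)))ᶜ x = Fc k x := by
    rw [compl_empty]
    exact fapp_univ Fc x
  rw [h1, h2, one_mul]
  linear_combination -(hrec k x)

lemma recRel (hG0 : ∀ x, G 0 x = 1)
    (hrec : ∀ (k : ℕ) (x : Fin k → ℝ),
      Fc k x = F k x - ∑ A ∈ (univ : Finset (Fin k)).powerset.filter (· ≠ ∅),
        fapp G A x * fapp Fc Aᶜ x) :
    ∀ (k : ℕ) (s : Finset (Fin k)) (x : Fin k → ℝ),
      fapp F s x = ∑ A ∈ s.powerset, fapp G A x * fapp Fc (s \ A) x := by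
  intro k s x
  have h := recFull F G Fc hG0 hrec s.card (res x s)
  rw [sum_powerset_reindex s]
  rw [show fapp F s x = F s.card (res x s) from rfl, h]
  apply sum_congr rfl
  intro A' _
  congr 1
  · exact (fapp_map G (s.orderEmbOfFin rfl) A' x).symm
  · rw [sdiff_map_oe]
    exact (fapp_map Fc (s.orderEmbOfFin rfl) (A')ᶜ x).symm

lemma Fc_diffAt (hFsmooth : ∀ k, ContDiffOn ℝ (⊤ : ℕ∞) (F k) (OmegaSet k))
    (hGsmooth : ∀ k, ContDiffOn ℝ (⊤ : ℕ∞) (G k) (OmegaSet k))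
    (hrec : ∀ (k : ℕ) (x : Fin k → ℝ),
      Fc k x = F k x - ∑ A ∈ (univ : Finset (Fin k)).powerset.filter (· ≠ ∅),
        fapp G A x * fapp Fc Aᶜ x) :
    ∀ (m : ℕ), ∀ x ∈ OmegaSet m, DifferentiableAt ℝ (Fc m) x := by
  intro m
  induction m using Nat.strong_induction_on with
  | _ m IH =>
  intro x hx
  have hFc : Fc m = fun z => F m z - ∑ A ∈ (univ : Finset (Fin m)).powerset.filter (· ≠ ∅),
      fapp G A z * fapp Fc Aᶜ z := funext (hrec m)
  rw [hFc]
  refine DifferentiableAt.sub (diffAt_of_contDiffOn (hFsmooth m) hx) ?_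
  refine DifferentiableAt.fun_sum ?_
  intro A hA
  have hA' : A ≠ ∅ := (mem_filter.1 hA).2
  refine DifferentiableAt.mul ?_ ?_
  · exact fapp_diffAt A (diffAt_of_contDiffOn (hGsmooth A.card) (res_mem hx A))
  · refine fapp_diffAt Aᶜ (IH Aᶜ.card ?_ _ (res_mem hx Aᶜ))
    have := (Finset.card_compl_lt_iff_nonempty _).2 (nonempty_iff_ne_empty.2 hA')
    simpa using this

lemma pderiv_Fc_rec (hFsmooth : ∀ k, ContDiffOn ℝ (⊤ : ℕ∞) (F k) (OmegaSet k))
    (hGsmooth : ∀ k, ContDiffOn ℝ (⊤ : ℕ∞) (G k) (OmegaSet k))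
    (hrec : ∀ (k : ℕ) (x : Fin k → ℝ),
      Fc k x = F k x - ∑ A ∈ (univ : Finset (Fin k)).powerset.filter (· ≠ ∅),
        fapp G A x * fapp Fc Aᶜ x) :
    ∀ (m : ℕ), ∀ x ∈ OmegaSet m, ∀ i : Fin m,
      pderivC i (Fc m) x = pderivC i (F m) x
        - ∑ A ∈ (univ : Finset (Fin m)).powerset.filter (· ≠ ∅),
            (pderivC i (fapp G A) x * fapp Fc Aᶜ x
              + fapp G A x * pderivC i (fapp Fc Aᶜ) x) := by
  intro m x hx i
  have hF := hasDerivAt_pderiv (diffAt_of_contDiffOn (hFsmooth m) hx) i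
  have hsum : HasDerivAt
      (fun t => ∑ A ∈ (univ : Finset (Fin m)).powerset.filter (· ≠ ∅),
        fapp G A (Function.update x i t) * fapp Fc Aᶜ (Function.update x i t))
      (∑ A ∈ (univ : Finset (Fin m)).powerset.filter (· ≠ ∅),
        (pderivC i (fapp G A) x * fapp Fc Aᶜ (Function.update x i (x i))
          + fapp G A (Function.update x i (x i)) * pderivC i (fapp Fc Aᶜ) x)) (x i) := by
    refine HasDerivAt.fun_sum ?_
    intro A hA
    have hA' : A ≠ ∅ := (mem_filter.1 hA).2
    have hG := hasDerivAt_fapp A (diffAt_of_contDiffOn (hGsmooth A.card) (res_mem hx A)) i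
    have hFcd := hasDerivAt_fapp Aᶜ
      (Fc_diffAt F G Fc hFsmooth hGsmooth hrec Aᶜ.card _ (res_mem hx Aᶜ)) i
    exact hG.mul hFcd
  have h2 : HasDerivAt (fun t => Fc m (Function.update x i t))
      (pderivC i (F m) x - ∑ A ∈ (univ : Finset (Fin m)).powerset.filter (· ≠ ∅),
        (pderivC i (fapp G A) x * fapp Fc Aᶜ (Function.update x i (x i))
          + fapp G A (Function.update x i (x i)) * pderivC i (fapp Fc Aᶜ) x)) (x i) := by
    have heq : (fun t => Fc m (Function.update x i t))
        = fun t => F m (Function.update x i t)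
          - ∑ A ∈ (univ : Finset (Fin m)).powerset.filter (· ≠ ∅),
              fapp G A (Function.update x i t) * fapp Fc Aᶜ (Function.update x i t) :=
      funext fun t => hrec m (Function.update x i t)
    rw [heq]
    exact hF.sub hsum
  have h3 := h2.deriv
  show deriv _ _ = _
  rw [h3]
  simp only [Function.update_eq_self]

lemma fapp_up (f : (k : ℕ) → (Fin k → ℝ) → ℂ) {n : ℕ} (B : Finset (Fin n))
    (x : Fin n → ℝ) (y : ℝ) :
    fapp f (B.map Fin.castSuccEmb) (Fin.snoc x y) = fapp f B x := by
  rw [← castSuccEmb_eq, fapp_map]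
  exact congrArg (fapp f B) (snoc_comp_castSucc x y)

lemma wardF' (h c : ℂ)
    (hFward0 : ∀ y : ℝ, y ≠ 0 → F 1 (fun _ => y) = h / (y : ℂ) ^ 2 * F 0 ![])
    (hFward : ∀ (k : ℕ) (x : Fin (k + 1) → ℝ) (y : ℝ), Fin.snoc x y ∈ OmegaSet (k + 2) →
      F (k + 2) (Fin.snoc x y) =
        (∑ i : Fin (k + 1),
          ((((1 / (y - x i) - 1 / y : ℝ)) : ℂ) * pderivC i (F (k + 1)) x
            + (((2 / (y - x i) ^ 2 : ℝ)) : ℂ) * F (k + 1) x))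
        + h / (y : ℂ) ^ 2 * F (k + 1) x
        + ∑ j : Fin (k + 1),
            c / 2 * (1 / (((y - x j : ℝ)) : ℂ) ^ 4) * F k (x ∘ j.succAbove)) :
    ∀ (m : ℕ) (x : Fin m → ℝ) (y : ℝ), Fin.snoc x y ∈ OmegaSet (m + 1) →
      F (m + 1) (Fin.snoc x y) =
        (∑ i : Fin m,
          ((((1 / (y - x i) - 1 / y : ℝ)) : ℂ) * pderivC i (F m) x
            + (((2 / (y - x i) ^ 2 : ℝ)) : ℂ) * F m x))
        + h / (y : ℂ) ^ 2 * F m x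
        + ∑ j : Fin m,
            c / 2 * (1 / (((y - x j : ℝ)) : ℂ) ^ 4) * fapp F ({j}ᶜ : Finset (Fin m)) x := by
  intro m
  match m with
  | 0 =>
    intro x y hmem
    have hy : y ≠ 0 := by
      have := hmem.1 (Fin.last 0)
      rwa [Fin.snoc_last] at this
    have h1 : (Fin.snoc x y : Fin 1 → ℝ) = fun _ => y := by
      funext z
      have hz : z = Fin.last 0 := Subsingleton.elim (α := Fin 1) z (Fin.last 0)
      rw [hz, Fin.snoc_last]
    have h2 : F 0 ![] = F 0 x := congrArg (F 0) (funext fun i => i.elim0)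
    rw [h1, hFward0 y hy, h2]
    simp
  | (k+1) =>
    intro x y hmem
    rw [hFward k x y hmem]
    congr 1
    apply Finset.sum_congr rfl
    intro j _
    rw [fapp_compl_singleton]

lemma wardG' (c : ℂ)
    (hG1 : ∀ x, G 1 x = 0)
    (hGward : ∀ (k : ℕ) (x : Fin (k + 1) → ℝ) (y : ℝ), Fin.snoc x y ∈ OmegaSet (k + 2) →
      G (k + 2) (Fin.snoc x y) =
        (∑ i : Fin (k + 1),
          ((((1 / (y - x i) - 1 / y : ℝ)) : ℂ) * pderivC i (G (k + 1)) x
            + (((2 / (y - x i) ^ 2 : ℝ)) : ℂ) * G (k + 1) x))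
        + ∑ j : Fin (k + 1),
            c / 2 * (1 / (((y - x j : ℝ)) : ℂ) ^ 4) * G k (x ∘ j.succAbove)) :
    ∀ (m : ℕ) (x : Fin m → ℝ) (y : ℝ), Fin.snoc x y ∈ OmegaSet (m + 1) →
      G (m + 1) (Fin.snoc x y) =
        (∑ i : Fin m,
          ((((1 / (y - x i) - 1 / y : ℝ)) : ℂ) * pderivC i (G m) x
            + (((2 / (y - x i) ^ 2 : ℝ)) : ℂ) * G m x))
        + ∑ j : Fin m,
            c / 2 * (1 / (((y - x j : ℝ)) : ℂ) ^ 4) * fapp G ({j}ᶜ : Finset (Fin m)) x := by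
  intro m
  match m with
  | 0 =>
    intro x y _
    rw [hG1]
    simp
  | (k+1) =>
    intro x y hmem
    rw [hGward k x y hmem]
    congr 1
    apply Finset.sum_congr rfl
    intro j _
    rw [fapp_compl_singleton]

/-- the contact-term matching identity -/
lemma contact_match (hG0 : ∀ x, G 0 x = 1)
    (hrec : ∀ (k : ℕ) (x : Fin k → ℝ),
      Fc k x = F k x - ∑ A ∈ (univ : Finset (Fin k)).powerset.filter (· ≠ ∅),
        fapp G A x * fapp Fc Aᶜ x)
    {n : ℕ} (x : Fin n → ℝ) (ω : Fin n → ℂ) :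
    ∑ j : Fin n, ω j * fapp F ({j}ᶜ : Finset (Fin n)) x
      = ∑ B ∈ (univ : Finset (Fin n)).powerset,
          (∑ j ∈ B, ω j * fapp G (B.erase j) x) * fapp Fc Bᶜ x := by
  have key : ∀ j : Fin n,
      ∑ B ∈ ((univ : Finset (Fin n)).powerset).filter (j ∈ ·),
          ω j * fapp G (B.erase j) x * fapp Fc Bᶜ x
        = ω j * fapp F ({j}ᶜ : Finset (Fin n)) x := by
    intro j
    rw [recRel F G Fc hG0 hrec n ({j}ᶜ : Finset (Fin n)) x, Finset.mul_sum]
    refine Finset.sum_nbij' (fun B => B.erase j) (fun C => insert j C) ?_ ?_ ?_ ?_ ?_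
    · intro B hB
      rw [mem_powerset]
      intro a ha
      rw [mem_compl, mem_singleton]
      exact (mem_erase.1 ha).1
    · intro C hC
      rw [mem_filter]
      exact ⟨mem_powerset.2 (subset_univ _), mem_insert_self j C⟩
    · intro B hB
      exact insert_erase (mem_filter.1 hB).2
    · intro C hC
      refine erase_insert (fun hj => ?_)
      have := mem_powerset.1 hC hj
      rw [mem_compl, mem_singleton] at this
      exact this rfl
    · intro B hB
      rw [mul_assoc]
      congr 2
      rw [compl_eq_sdiff_erase (mem_filter.1 hB).2]
  calc ∑ j : Fin n, ω j * fapp F ({j}ᶜ : Finset (Fin n)) x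
      = ∑ j : Fin n, ∑ B ∈ ((univ : Finset (Fin n)).powerset).filter (j ∈ ·),
          ω j * fapp G (B.erase j) x * fapp Fc Bᶜ x := by
        exact Finset.sum_congr rfl fun j _ => (key j).symm
    _ = ∑ j : Fin n, ∑ B ∈ (univ : Finset (Fin n)).powerset,
          if j ∈ B then ω j * fapp G (B.erase j) x * fapp Fc Bᶜ x else 0 := by
        exact Finset.sum_congr rfl fun j _ => Finset.sum_filter _ _
    _ = ∑ B ∈ (univ : Finset (Fin n)).powerset, ∑ j : Fin n,
          if j ∈ B then ω j * fapp G (B.erase j) x * fapp Fc Bᶜ x else 0 :=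
        Finset.sum_comm
    _ = ∑ B ∈ (univ : Finset (Fin n)).powerset,
          (∑ j ∈ B, ω j * fapp G (B.erase j) x) * fapp Fc Bᶜ x := by
        refine Finset.sum_congr rfl fun B _ => ?_
        rw [Finset.sum_mul]
        rw [show ∑ j : Fin n, (if j ∈ B then ω j * fapp G (B.erase j) x * fapp Fc Bᶜ x else 0)
          = ∑ j ∈ univ.filter (· ∈ B), ω j * fapp G (B.erase j) x * fapp Fc Bᶜ x from
          (Finset.sum_filter _ _).symm]
        refine Finset.sum_congr ?_ fun j _ => rfl
        ext a
        simp

end Family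

end CFT15

open CFT15

/-- Connected correlators satisfy the conformal Ward identities without anomalous
contact terms: if the families `F_k` (correlators with the weight-`h` boundary
insertion) and `G_k` (pure stress-tensor correlators at central charge `c`) satisfy
the Ward identities with contact terms `(c/2)(y-xⱼ)⁻⁴`, then the connected functions
`F^c_k` satisfy the anomaly-free Ward identity. -/
theorem stmt15 (h c : ℂ)
    (F G Fc : (k : ℕ) → (Fin k → ℝ) → ℂ)
    (hFsmooth : ∀ k, ContDiffOn ℝ (⊤ : ℕ∞) (F k) (OmegaSet k))
    (hGsmooth : ∀ k, ContDiffOn ℝ (⊤ : ℕ∞) (G k) (OmegaSet k))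
    (hFsymm : ∀ (k : ℕ) (σ : Equiv.Perm (Fin k)) (x : Fin k → ℝ), F k (x ∘ σ) = F k x)
    (hGsymm : ∀ (k : ℕ) (σ : Equiv.Perm (Fin k)) (x : Fin k → ℝ), G k (x ∘ σ) = G k x)
    (hG0 : ∀ x, G 0 x = 1)
    (hG1 : ∀ x, G 1 x = 0)
    (hFward0 : ∀ y : ℝ, y ≠ 0 → F 1 (fun _ => y) = h / (y : ℂ) ^ 2 * F 0 ![])
    (hFward : ∀ (k : ℕ) (x : Fin (k + 1) → ℝ) (y : ℝ), Fin.snoc x y ∈ OmegaSet (k + 2) →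
      F (k + 2) (Fin.snoc x y) =
        (∑ i : Fin (k + 1),
          ((((1 / (y - x i) - 1 / y : ℝ)) : ℂ) * pderivC i (F (k + 1)) x
            + (((2 / (y - x i) ^ 2 : ℝ)) : ℂ) * F (k + 1) x))
        + h / (y : ℂ) ^ 2 * F (k + 1) x
        + ∑ j : Fin (k + 1),
            c / 2 * (1 / (((y - x j : ℝ)) : ℂ) ^ 4) * F k (x ∘ j.succAbove))
    (hGward0 : ∀ y : ℝ, y ≠ 0 → G 1 (fun _ => y) = 0)
    (hGward : ∀ (k : ℕ) (x : Fin (k + 1) → ℝ) (y : ℝ), Fin.snoc x y ∈ OmegaSet (k + 2) →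
      G (k + 2) (Fin.snoc x y) =
        (∑ i : Fin (k + 1),
          ((((1 / (y - x i) - 1 / y : ℝ)) : ℂ) * pderivC i (G (k + 1)) x
            + (((2 / (y - x i) ^ 2 : ℝ)) : ℂ) * G (k + 1) x))
        + ∑ j : Fin (k + 1),
            c / 2 * (1 / (((y - x j : ℝ)) : ℂ) ^ 4) * G k (x ∘ j.succAbove))
    (hFc0 : ∀ x, Fc 0 x = F 0 x)
    (hFcrec : ∀ (k : ℕ) (x : Fin k → ℝ),
      Fc k x = F k x - ∑ A ∈ (Finset.univ : Finset (Fin k)).powerset.filter (· ≠ ∅),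
        G A.card (fun i => x ((A.orderIsoOfFin rfl i : Fin k)))
          * Fc (k - A.card)
              (fun i => x (((Aᶜ).orderIsoOfFin
                (by rw [Finset.card_compl, Fintype.card_fin]) i : Fin k)))) :
    ∀ (k : ℕ) (x : Fin k → ℝ) (y : ℝ), Fin.snoc x y ∈ OmegaSet (k + 1) →
      Fc (k + 1) (Fin.snoc x y) =
        (∑ i : Fin k,
          ((((1 / (y - x i) - 1 / y : ℝ)) : ℂ) * pderivC i (Fc k) x
            + (((2 / (y - x i) ^ 2 : ℝ)) : ℂ) * Fc k x))
        + h / (y : ℂ) ^ 2 * Fc k x := by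
  have hrec := CFT15.hFcrec' F G Fc hFcrec
  have hwF := CFT15.wardF' F h c hFward0 hFward
  have hwG := CFT15.wardG' G c hG1 hGward
  have hpd := CFT15.pderiv_Fc_rec F G Fc hFsmooth hGsmooth hrec
  intro k
  induction k using Nat.strong_induction_on with
  | _ n IH =>
  intro x y hmem
  have hx : x ∈ OmegaSet n := CFT15.x_mem_of_snoc hmem
  -- Term 1 : subsets not containing the new point
  have e3 : ∀ B ∈ (univ : Finset (Fin n)).powerset.filter (· ≠ ∅),
      fapp G (B.map Fin.castSuccEmb) (Fin.snoc x y)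
          * fapp Fc (B.map Fin.castSuccEmb)ᶜ (Fin.snoc x y)
        = fapp G B x *
            ((∑ i : Fin n, (((1 / (y - x i) - 1 / y : ℝ)) : ℂ) * pderivC i (fapp Fc Bᶜ) x)
              + (∑ i ∈ Bᶜ, (((2 / (y - x i) ^ 2 : ℝ)) : ℂ)) * fapp Fc Bᶜ x
              + h / (y : ℂ) ^ 2 * fapp Fc Bᶜ x) := by
    intro B hB
    have hBne : B ≠ ∅ := (mem_filter.1 hB).2
    have hlt : Bᶜ.card < n := by
      simpa using (Finset.card_compl_lt_iff_nonempty _).2 (nonempty_iff_ne_empty.2 hBne)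
    have hIH := IH Bᶜ.card hlt (res x Bᶜ) y (CFT15.snoc_res_mem hmem Bᶜ)
    have hws := CFT15.ward_sum_eq Fc Bᶜ x
      (fun r => (((1 / (y - r) - 1 / y : ℝ)) : ℂ))
      (fun r => (((2 / (y - r) ^ 2 : ℝ)) : ℂ))
    rw [CFT15.fapp_up G B x y, CFT15.compl_map_castSucc, CFT15.fapp_insert_last Fc Bᶜ x y,
      hIH, hws]
    rfl
  -- Term 2 : subsets containing the new point
  have e4 : ∀ B ∈ (univ : Finset (Fin n)).powerset,
      fapp G (insert (Fin.last n) (B.map Fin.castSuccEmb)) (Fin.snoc x y)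
          * fapp Fc (insert (Fin.last n) (B.map Fin.castSuccEmb))ᶜ (Fin.snoc x y)
        = ((∑ i : Fin n, (((1 / (y - x i) - 1 / y : ℝ)) : ℂ) * pderivC i (fapp G B) x)
            + (∑ i ∈ B, (((2 / (y - x i) ^ 2 : ℝ)) : ℂ)) * fapp G B x
            + ∑ j ∈ B, c / 2 * (1 / (((y - x j : ℝ)) : ℂ) ^ 4) * fapp G (B.erase j) x)
            * fapp Fc Bᶜ x := by
    intro B _
    have hws := CFT15.ward_sum_eq G B x
      (fun r => (((1 / (y - r) - 1 / y : ℝ)) : ℂ))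
      (fun r => (((2 / (y - r) ^ 2 : ℝ)) : ℂ))
    have hcs := CFT15.contact_sum_eq G B x
      (fun r => c / 2 * (1 / (((y - r : ℝ)) : ℂ) ^ 4))
    rw [CFT15.fapp_insert_last G B x y, CFT15.compl_insert_last, CFT15.fapp_up Fc Bᶜ x y,
      hwG B.card (res x B) y (CFT15.snoc_res_mem hmem B), hws, hcs]
  -- contact matching
  have eW := CFT15.contact_match F G Fc hG0 hrec x
    (fun j => c / 2 * (1 / (((y - x j : ℝ)) : ℂ) ^ 4))
  have hpdn : ∀ i : Fin n, pderivC i (Fc n) x = pderivC i (F n) x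
      - ∑ B ∈ (univ : Finset (Fin n)).powerset.filter (· ≠ ∅),
          (pderivC i (fapp G B) x * fapp Fc Bᶜ x + fapp G B x * pderivC i (fapp Fc Bᶜ) x) :=
    hpd n x hx
  have hrecn := hrec n x
  -- I1 : collecting the derivative terms
  have I1 : (∑ B ∈ (univ : Finset (Fin n)).powerset.filter (· ≠ ∅),
        fapp G B x * (∑ i : Fin n,
          (((1 / (y - x i) - 1 / y : ℝ)) : ℂ) * pderivC i (fapp Fc Bᶜ) x))
      + (∑ B ∈ (univ : Finset (Fin n)).powerset,
          (∑ i : Fin n,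
            (((1 / (y - x i) - 1 / y : ℝ)) : ℂ) * pderivC i (fapp G B) x) * fapp Fc Bᶜ x)
      = ∑ i : Fin n, (((1 / (y - x i) - 1 / y : ℝ)) : ℂ)
          * ∑ B ∈ (univ : Finset (Fin n)).powerset.filter (· ≠ ∅),
              (pderivC i (fapp G B) x * fapp Fc Bᶜ x
                + fapp G B x * pderivC i (fapp Fc Bᶜ) x) := by
    have hP : (∑ B ∈ (univ : Finset (Fin n)).powerset,
          (∑ i : Fin n,
            (((1 / (y - x i) - 1 / y : ℝ)) : ℂ) * pderivC i (fapp G B) x) * fapp Fc Bᶜ x)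
        = ∑ B ∈ (univ : Finset (Fin n)).powerset.filter (· ≠ ∅),
          (∑ i : Fin n,
            (((1 / (y - x i) - 1 / y : ℝ)) : ℂ) * pderivC i (fapp G B) x) * fapp Fc Bᶜ x := by
      rw [CFT15.sum_pe (fun B => (∑ i : Fin n,
        (((1 / (y - x i) - 1 / y : ℝ)) : ℂ) * pderivC i (fapp G B) x) * fapp Fc Bᶜ x)]
      rw [Finset.sum_eq_zero (fun i _ => by
        rw [CFT15.pderiv_fapp_not_mem (notMem_empty i), mul_zero]), zero_mul, zero_add]
    rw [hP, ← Finset.sum_add_distrib]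
    calc ∑ B ∈ (univ : Finset (Fin n)).powerset.filter (· ≠ ∅),
          (fapp G B x * (∑ i : Fin n,
            (((1 / (y - x i) - 1 / y : ℝ)) : ℂ) * pderivC i (fapp Fc Bᶜ) x)
          + (∑ i : Fin n,
            (((1 / (y - x i) - 1 / y : ℝ)) : ℂ) * pderivC i (fapp G B) x) * fapp Fc Bᶜ x)
        = ∑ B ∈ (univ : Finset (Fin n)).powerset.filter (· ≠ ∅), ∑ i : Fin n,
            (((1 / (y - x i) - 1 / y : ℝ)) : ℂ)
              * (pderivC i (fapp G B) x * fapp Fc Bᶜ x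
                + fapp G B x * pderivC i (fapp Fc Bᶜ) x) := by
          refine Finset.sum_congr rfl fun B _ => ?_
          rw [Finset.mul_sum, Finset.sum_mul, ← Finset.sum_add_distrib]
          exact Finset.sum_congr rfl fun i _ => by ring
      _ = ∑ i : Fin n, ∑ B ∈ (univ : Finset (Fin n)).powerset.filter (· ≠ ∅),
            (((1 / (y - x i) - 1 / y : ℝ)) : ℂ)
              * (pderivC i (fapp G B) x * fapp Fc Bᶜ x
                + fapp G B x * pderivC i (fapp Fc Bᶜ) x) := Finset.sum_comm
      _ = _ := Finset.sum_congr rfl fun i _ => (Finset.mul_sum _ _ _).symm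
  -- I2 : collecting the potential terms
  have I2 : (∑ B ∈ (univ : Finset (Fin n)).powerset.filter (· ≠ ∅),
        fapp G B x * ((∑ i ∈ Bᶜ, (((2 / (y - x i) ^ 2 : ℝ)) : ℂ)) * fapp Fc Bᶜ x))
      + (∑ B ∈ (univ : Finset (Fin n)).powerset,
          (∑ i ∈ B, (((2 / (y - x i) ^ 2 : ℝ)) : ℂ)) * fapp G B x * fapp Fc Bᶜ x)
      = (∑ i : Fin n, (((2 / (y - x i) ^ 2 : ℝ)) : ℂ))
          * ∑ B ∈ (univ : Finset (Fin n)).powerset.filter (· ≠ ∅),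
              fapp G B x * fapp Fc Bᶜ x := by
    have hP : (∑ B ∈ (univ : Finset (Fin n)).powerset,
          (∑ i ∈ B, (((2 / (y - x i) ^ 2 : ℝ)) : ℂ)) * fapp G B x * fapp Fc Bᶜ x)
        = ∑ B ∈ (univ : Finset (Fin n)).powerset.filter (· ≠ ∅),
          (∑ i ∈ B, (((2 / (y - x i) ^ 2 : ℝ)) : ℂ)) * fapp G B x * fapp Fc Bᶜ x := by
      rw [CFT15.sum_pe (fun B =>
        (∑ i ∈ B, (((2 / (y - x i) ^ 2 : ℝ)) : ℂ)) * fapp G B x * fapp Fc Bᶜ x)]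
      rw [Finset.sum_empty, zero_mul, zero_mul, zero_add]
    rw [hP, ← Finset.sum_add_distrib, Finset.mul_sum]
    refine Finset.sum_congr rfl fun B _ => ?_
    have hab := Finset.sum_add_sum_compl B (fun i => (((2 / (y - x i) ^ 2 : ℝ)) : ℂ))
    linear_combination (fapp G B x * fapp Fc Bᶜ x) * hab
  -- expansion of the connected derivative sum
  have EpdFc : (∑ i : Fin n,
        ((((1 / (y - x i) - 1 / y : ℝ)) : ℂ) * pderivC i (Fc n) x
          + (((2 / (y - x i) ^ 2 : ℝ)) : ℂ) * Fc n x))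
      = ((∑ i : Fin n, (((1 / (y - x i) - 1 / y : ℝ)) : ℂ) * pderivC i (F n) x)
          - ∑ i : Fin n, (((1 / (y - x i) - 1 / y : ℝ)) : ℂ)
              * ∑ B ∈ (univ : Finset (Fin n)).powerset.filter (· ≠ ∅),
                  (pderivC i (fapp G B) x * fapp Fc Bᶜ x
                    + fapp G B x * pderivC i (fapp Fc Bᶜ) x))
        + ((∑ i : Fin n, (((2 / (y - x i) ^ 2 : ℝ)) : ℂ)) * F n x
          - (∑ i : Fin n, (((2 / (y - x i) ^ 2 : ℝ)) : ℂ))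
              * ∑ B ∈ (univ : Finset (Fin n)).powerset.filter (· ≠ ∅),
                  fapp G B x * fapp Fc Bᶜ x) := by
    calc ∑ i : Fin n,
          ((((1 / (y - x i) - 1 / y : ℝ)) : ℂ) * pderivC i (Fc n) x
            + (((2 / (y - x i) ^ 2 : ℝ)) : ℂ) * Fc n x)
        = ∑ i : Fin n,
          (((((1 / (y - x i) - 1 / y : ℝ)) : ℂ) * pderivC i (F n) x
            - (((1 / (y - x i) - 1 / y : ℝ)) : ℂ)
              * ∑ B ∈ (univ : Finset (Fin n)).powerset.filter (· ≠ ∅),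
                  (pderivC i (fapp G B) x * fapp Fc Bᶜ x
                    + fapp G B x * pderivC i (fapp Fc Bᶜ) x))
          + ((((2 / (y - x i) ^ 2 : ℝ)) : ℂ) * F n x
            - (((2 / (y - x i) ^ 2 : ℝ)) : ℂ)
              * ∑ B ∈ (univ : Finset (Fin n)).powerset.filter (· ≠ ∅),
                  fapp G B x * fapp Fc Bᶜ x)) := by
          refine Finset.sum_congr rfl fun i _ => ?_
          rw [hpdn i, hrecn]
          ring
      _ = _ := by
          rw [Finset.sum_add_distrib, Finset.sum_sub_distrib, Finset.sum_sub_distrib,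
            ← Finset.sum_mul, ← Finset.sum_mul]
  -- assembling everything
  have e1 := hrec (n+1) (Fin.snoc x y)
  have esplit := CFT15.sum_filter_split
    (fun A => fapp G A (Fin.snoc x y) * fapp Fc Aᶜ (Fin.snoc x y))
  calc Fc (n+1) (Fin.snoc x y)
      = F (n+1) (Fin.snoc x y)
        - ∑ A ∈ (univ : Finset (Fin (n+1))).powerset.filter (· ≠ ∅),
            fapp G A (Fin.snoc x y) * fapp Fc Aᶜ (Fin.snoc x y) := e1
    _ = F (n+1) (Fin.snoc x y)
        - ((∑ B ∈ (univ : Finset (Fin n)).powerset.filter (· ≠ ∅),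
              fapp G (B.map Fin.castSuccEmb) (Fin.snoc x y)
                * fapp Fc (B.map Fin.castSuccEmb)ᶜ (Fin.snoc x y))
          + ∑ B ∈ (univ : Finset (Fin n)).powerset,
              fapp G (insert (Fin.last n) (B.map Fin.castSuccEmb)) (Fin.snoc x y)
                * fapp Fc (insert (Fin.last n) (B.map Fin.castSuccEmb))ᶜ (Fin.snoc x y)) := by
        rw [esplit]
    _ = F (n+1) (Fin.snoc x y)
        - ((∑ B ∈ (univ : Finset (Fin n)).powerset.filter (· ≠ ∅),
            fapp G B x *
              ((∑ i : Fin n,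
                (((1 / (y - x i) - 1 / y : ℝ)) : ℂ) * pderivC i (fapp Fc Bᶜ) x)
                + (∑ i ∈ Bᶜ, (((2 / (y - x i) ^ 2 : ℝ)) : ℂ)) * fapp Fc Bᶜ x
                + h / (y : ℂ) ^ 2 * fapp Fc Bᶜ x))
          + ∑ B ∈ (univ : Finset (Fin n)).powerset,
              ((∑ i : Fin n,
                (((1 / (y - x i) - 1 / y : ℝ)) : ℂ) * pderivC i (fapp G B) x)
                + (∑ i ∈ B, (((2 / (y - x i) ^ 2 : ℝ)) : ℂ)) * fapp G B x
                + ∑ j ∈ B, c / 2 * (1 / (((y - x j : ℝ)) : ℂ) ^ 4) * fapp G (B.erase j) x)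
                * fapp Fc Bᶜ x) := by
        rw [Finset.sum_congr rfl e3, Finset.sum_congr rfl e4]
    _ = (∑ i : Fin n,
          ((((1 / (y - x i) - 1 / y : ℝ)) : ℂ) * pderivC i (F n) x
            + (((2 / (y - x i) ^ 2 : ℝ)) : ℂ) * F n x))
        + h / (y : ℂ) ^ 2 * F n x
        + (∑ j : Fin n, c / 2 * (1 / (((y - x j : ℝ)) : ℂ) ^ 4)
            * fapp F ({j}ᶜ : Finset (Fin n)) x)
        - ((∑ B ∈ (univ : Finset (Fin n)).powerset.filter (· ≠ ∅),
            fapp G B x *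
              ((∑ i : Fin n,
                (((1 / (y - x i) - 1 / y : ℝ)) : ℂ) * pderivC i (fapp Fc Bᶜ) x)
                + (∑ i ∈ Bᶜ, (((2 / (y - x i) ^ 2 : ℝ)) : ℂ)) * fapp Fc Bᶜ x
                + h / (y : ℂ) ^ 2 * fapp Fc Bᶜ x))
          + ∑ B ∈ (univ : Finset (Fin n)).powerset,
              ((∑ i : Fin n,
                (((1 / (y - x i) - 1 / y : ℝ)) : ℂ) * pderivC i (fapp G B) x)
                + (∑ i ∈ B, (((2 / (y - x i) ^ 2 : ℝ)) : ℂ)) * fapp G B x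
                + ∑ j ∈ B, c / 2 * (1 / (((y - x j : ℝ)) : ℂ) ^ 4) * fapp G (B.erase j) x)
                * fapp Fc Bᶜ x) := by
        rw [hwF n x y hmem]
    _ = (∑ i : Fin n,
          ((((1 / (y - x i) - 1 / y : ℝ)) : ℂ) * pderivC i (Fc n) x
            + (((2 / (y - x i) ^ 2 : ℝ)) : ℂ) * Fc n x))
        + h / (y : ℂ) ^ 2 * Fc n x := by
        -- decompose the two big sums
        have eT1 : ∑ B ∈ (univ : Finset (Fin n)).powerset.filter (· ≠ ∅),
            fapp G B x *
              ((∑ i : Fin n,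
                (((1 / (y - x i) - 1 / y : ℝ)) : ℂ) * pderivC i (fapp Fc Bᶜ) x)
                + (∑ i ∈ Bᶜ, (((2 / (y - x i) ^ 2 : ℝ)) : ℂ)) * fapp Fc Bᶜ x
                + h / (y : ℂ) ^ 2 * fapp Fc Bᶜ x)
            = (∑ B ∈ (univ : Finset (Fin n)).powerset.filter (· ≠ ∅),
                fapp G B x * (∑ i : Fin n,
                  (((1 / (y - x i) - 1 / y : ℝ)) : ℂ) * pderivC i (fapp Fc Bᶜ) x))
              + (∑ B ∈ (univ : Finset (Fin n)).powerset.filter (· ≠ ∅),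
                  fapp G B x * ((∑ i ∈ Bᶜ, (((2 / (y - x i) ^ 2 : ℝ)) : ℂ)) * fapp Fc Bᶜ x))
              + h / (y : ℂ) ^ 2 * ∑ B ∈ (univ : Finset (Fin n)).powerset.filter (· ≠ ∅),
                  fapp G B x * fapp Fc Bᶜ x := by
          rw [Finset.mul_sum, ← Finset.sum_add_distrib, ← Finset.sum_add_distrib]
          refine Finset.sum_congr rfl fun B _ => ?_
          ring
        have eT2 : ∑ B ∈ (univ : Finset (Fin n)).powerset,
            ((∑ i : Fin n,
              (((1 / (y - x i) - 1 / y : ℝ)) : ℂ) * pderivC i (fapp G B) x)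
              + (∑ i ∈ B, (((2 / (y - x i) ^ 2 : ℝ)) : ℂ)) * fapp G B x
              + ∑ j ∈ B, c / 2 * (1 / (((y - x j : ℝ)) : ℂ) ^ 4) * fapp G (B.erase j) x)
              * fapp Fc Bᶜ x
            = (∑ B ∈ (univ : Finset (Fin n)).powerset,
                (∑ i : Fin n,
                  (((1 / (y - x i) - 1 / y : ℝ)) : ℂ) * pderivC i (fapp G B) x)
                  * fapp Fc Bᶜ x)
              + (∑ B ∈ (univ : Finset (Fin n)).powerset,
                  (∑ i ∈ B, (((2 / (y - x i) ^ 2 : ℝ)) : ℂ)) * fapp G B x * fapp Fc Bᶜ x)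
              + ∑ B ∈ (univ : Finset (Fin n)).powerset,
                  (∑ j ∈ B, c / 2 * (1 / (((y - x j : ℝ)) : ℂ) ^ 4)
                    * fapp G (B.erase j) x) * fapp Fc Bᶜ x := by
          rw [← Finset.sum_add_distrib, ← Finset.sum_add_distrib]
          refine Finset.sum_congr rfl fun B _ => ?_
          ring
        have hsplitF : ∑ i : Fin n,
            ((((1 / (y - x i) - 1 / y : ℝ)) : ℂ) * pderivC i (F n) x
              + (((2 / (y - x i) ^ 2 : ℝ)) : ℂ) * F n x)
            = (∑ i : Fin n, (((1 / (y - x i) - 1 / y : ℝ)) : ℂ) * pderivC i (F n) x)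
              + (∑ i : Fin n, (((2 / (y - x i) ^ 2 : ℝ)) : ℂ)) * F n x := by
          rw [Finset.sum_add_distrib, ← Finset.sum_mul]
        rw [eT1, eT2, eW, hsplitF]
        linear_combination -EpdFc - I1 - I2 - (h / (y : ℂ) ^ 2) * hrecn
end
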